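/- arXiv:1507.01495 — 10 statements merged into one kernel-verified Lean document; each statement's English description precedes it below -/
import Mathlib

section
/- For every prime power q and every positive integer k there exists an element a ∈ F_{q^k} such that the polynomial X^{q−1} − a ∈ F_{q^k}[X] is irreducible over F_{q^k}. -/
open Polynomial

/-- Arithmetic key lemma: if `n ∣ Q - 1` and `n * (Q - 1) ∣ Q ^ d - 1`, then `n ∣ d`. -/
lemma arith_key_aux {n Q d : ℕ} (hn : 0 < n) (hQ : 2 ≤ Q) (hndvd : n ∣ Q - 1)
    (h : n * (Q - 1) ∣ Q ^ d - 1) : n ∣ d := by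
  set S : ℕ := ∑ i ∈ Finset.range d, Q ^ i with hS_def
  have hgeom : Q ^ d - 1 = (Q - 1) * S := by
    have key : ((Q : ℤ) - 1) * (S : ℤ) = (Q : ℤ) ^ d - 1 := by
      rw [hS_def]
      push_cast
      rw [mul_comm]
      exact geom_sum_mul (Q : ℤ) d
    have h1 : (1 : ℕ) ≤ Q := by omega
    have h2 : (1 : ℕ) ≤ Q ^ d := Nat.one_le_pow _ _ (by omega)
    zify [h1, h2]
    linarith [key]
  rw [hgeom, mul_comm n (Q - 1)] at h
  have hQ1 : 0 < Q - 1 := by omega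
  have hnS : n ∣ S := (Nat.mul_dvd_mul_iff_left hQ1).mp h
  have hQ1mod : (Q : ZMod n) = 1 := by
    have h0 : ((Q - 1 : ℕ) : ZMod n) = 0 := (ZMod.natCast_eq_zero_iff _ _).mpr hndvd
    have hq : Q = (Q - 1) + 1 := by omega
    rw [hq]
    push_cast [h0]
    ring
  have hSd : ((S : ZMod n)) = (d : ZMod n) := by
    rw [hS_def]
    push_cast
    simp [hQ1mod]
  have h0 : ((S : ZMod n)) = 0 := (ZMod.natCast_eq_zero_iff _ _).mpr hnS
  rw [h0] at hSd
  exact (ZMod.natCast_eq_zero_iff _ _).mp hSd.symm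

/-- Any element of an extension of a finite field fixed by the `card`-power Frobenius lies in
the image of the base field. -/
lemma mem_range_of_pow_card_aux {K L : Type*} [Field K] [Fintype K] [Field L] [Algebra K L]
    {x : L} (hx : x ^ Fintype.card K = x) : ∃ a : K, algebraMap K L a = x := by
  classical
  set Q := Fintype.card K with hQ_def
  set g : L[X] := X ^ Q - X with hg
  have hQ : 1 < Q := Fintype.one_lt_card
  have hgne : g ≠ 0 := FiniteField.X_pow_card_sub_X_ne_zero L hQ
  set S : Finset L := Finset.univ.image (algebraMap K L) with hS
  have hcardS : S.card = Q := by
    rw [hS, Finset.card_image_of_injective _ (algebraMap K L).injective, Finset.card_univ]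
  have hsub : S ⊆ g.roots.toFinset := by
    intro y hy
    simp only [hS, Finset.mem_image] at hy
    obtain ⟨b, -, rfl⟩ := hy
    rw [Multiset.mem_toFinset, mem_roots hgne]
    simp [hg, IsRoot, hQ_def, ← map_pow, FiniteField.pow_card]
  have hcard : g.roots.toFinset.card ≤ Q := by
    calc g.roots.toFinset.card ≤ Multiset.card g.roots := g.roots.toFinset_card_le
      _ ≤ g.natDegree := g.card_roots'
      _ = Q := FiniteField.X_pow_card_sub_X_natDegree_eq L hQ
  have hSe : S = g.roots.toFinset :=
    Finset.eq_of_subset_of_card_le hsub (by rw [hcardS]; exact hcard)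
  have hxmem : x ∈ g.roots.toFinset := by
    rw [Multiset.mem_toFinset, mem_roots hgne]
    simp [hg, IsRoot, hx]
  rw [← hSe] at hxmem
  simp only [hS, Finset.mem_image] at hxmem
  obtain ⟨a, -, ha⟩ := hxmem
  exact ⟨a, ha⟩

/-- For every prime power `q` and every positive integer `k` there exists `a` in the
finite field with `q ^ k` elements such that `X ^ (q - 1) - a` is irreducible. -/
theorem stmt_0 (q k : ℕ) (hq : IsPrimePow q) (hk : 0 < k)
    (K : Type) [Field K] [Fintype K] (hK : Fintype.card K = q ^ k) :
    ∃ a : K, Irreducible (X ^ (q - 1) - C a : K[X]) := by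
  classical
  set n := q - 1 with hn_def
  set Q := q ^ k with hQ_def
  have hq2 : 2 ≤ q := hq.two_le
  have hn : 0 < n := by omega
  have hQ2 : 2 ≤ Q := le_trans hq2 (Nat.le_self_pow hk.ne' q)
  have hndvd : n ∣ Q - 1 := by
    simpa using Nat.sub_dvd_pow_sub_pow q 1 k
  set t := n * (Q - 1) with ht_def
  have ht : 0 < t := Nat.mul_pos hn (by omega)
  -- characteristic
  set p := ringChar K with hp_def
  haveI : CharP K p := ringChar.charP K
  have hp : p.Prime := CharP.char_is_prime K p
  have hpq : p ∣ q := by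
    obtain ⟨m, hm, hcard⟩ := FiniteField.card K p
    have hdvd : p ∣ q ^ k := by
      rw [← hQ_def, ← hK, hcard]
      exact dvd_pow_self p (by positivity)
    exact hp.dvd_of_dvd_pow hdvd
  set L := AlgebraicClosure K with hL_def
  haveI : CharP L p := charP_of_injective_algebraMap (algebraMap K L).injective p
  have hpt : ¬ p ∣ t := by
    rintro h
    rcases hp.dvd_mul.mp h with h | h
    · have h1 : p ∣ q - n := Nat.dvd_sub hpq h
      rw [show q - n = 1 by omega] at h1
      exact hp.one_lt.ne' (Nat.dvd_one.mp h1)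
    · have hpQ : p ∣ Q := hpq.trans (dvd_pow_self q hk.ne')
      have h1 : p ∣ Q - (Q - 1) := Nat.dvd_sub hpQ h
      rw [show Q - (Q - 1) = 1 by omega] at h1
      exact hp.one_lt.ne' (Nat.dvd_one.mp h1)
  haveI : NeZero ((t : ℕ) : L) := ⟨by
    rw [Ne, CharP.cast_eq_zero_iff L p]
    exact hpt⟩
  obtain ⟨ζ, hζ⟩ := HasEnoughRootsOfUnity.exists_primitiveRoot L t
  -- `ζ ^ n` lies in the image of `K`
  have ha'Q : (ζ ^ n) ^ Fintype.card K = ζ ^ n := by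
    have h1 : (ζ ^ n) ^ (Q - 1) = 1 := by
      rw [← pow_mul]; exact hζ.pow_eq_one
    rw [hK]
    calc (ζ ^ n) ^ Q = (ζ ^ n) ^ (Q - 1) * (ζ ^ n) := by
          rw [← pow_succ]; congr 1; omega
      _ = ζ ^ n := by rw [h1, one_mul]
  obtain ⟨a, ha⟩ := mem_range_of_pow_card_aux ha'Q
  refine ⟨a, ?_⟩
  have hζint : IsIntegral K ζ := Algebra.IsIntegral.isIntegral ζ
  have haeval : (aeval ζ) ((X : K[X]) ^ n - C a) = 0 := by
    simp [ha]
  have hdvd : minpoly K ζ ∣ X ^ n - C a := minpoly.dvd K ζ haeval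
  have hXne : (X ^ n - C a : K[X]) ≠ 0 := X_pow_sub_C_ne_zero hn a
  have hdle : (minpoly K ζ).natDegree ≤ n := by
    have h := Polynomial.natDegree_le_of_dvd hdvd hXne
    rwa [natDegree_X_pow_sub_C] at h
  set d := (minpoly K ζ).natDegree with hd_def
  -- lower bound on `d`
  have hpow : ζ ^ Q ^ d = ζ := by
    haveI := IntermediateField.adjoin.finiteDimensional hζint
    haveI : Finite (IntermediateField.adjoin K {ζ}) := Module.finite_of_finite K
    haveI : Fintype (IntermediateField.adjoin K {ζ}) := Fintype.ofFinite _
    have hcard : Fintype.card (IntermediateField.adjoin K {ζ}) = Q ^ d := by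
      rw [Module.card_eq_pow_finrank (K := K), hK, IntermediateField.adjoin.finrank hζint]
    have hgen := FiniteField.pow_card (IntermediateField.AdjoinSimple.gen K ζ)
    rw [hcard] at hgen
    have := congrArg (algebraMap (IntermediateField.adjoin K {ζ}) L) hgen
    simpa [IntermediateField.AdjoinSimple.algebraMap_gen] using this
  have hζne : ζ ≠ 0 := hζ.ne_zero ht.ne'
  have h1 : ζ ^ (Q ^ d - 1) = 1 := by
    have hQd : 1 ≤ Q ^ d := Nat.one_le_pow _ _ (by omega)
    have h2 : ζ ^ (Q ^ d - 1) * ζ = 1 * ζ := by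
      rw [one_mul, ← pow_succ, show Q ^ d - 1 + 1 = Q ^ d by omega]
      exact hpow
    exact mul_right_cancel₀ hζne h2
  have htdvd : t ∣ Q ^ d - 1 := hζ.dvd_of_pow_eq_one _ h1
  have hnd : n ∣ d := arith_key_aux hn hQ2 hndvd htdvd
  have hd0 : 0 < d := minpoly.natDegree_pos hζint
  have hge : n ≤ d := Nat.le_of_dvd hd0 hnd
  have hmin : minpoly K ζ = X ^ n - C a := by
    refine Polynomial.eq_of_monic_of_associated (minpoly.monic hζint)
      (monic_X_pow_sub_C a hn.ne') ?_
    refine Polynomial.associated_of_dvd_of_natDegree_le hdvd hXne ?_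
    rw [natDegree_X_pow_sub_C]
    exact hge
  rw [← hmin]
  exact minpoly.irreducible hζint
end

section
/- Let q be a prime power and K a finite field containing F_q. For every nonzero B ∈ K, the polynomial X^{q+1} − BX + B splits completely into linear factors over K if and only if there exists u ∈ K with u^{q²} ≠ u such that B = (u − u^{q²})^{q+1} / (u − u^q)^{q²+1}. -/
open Polynomial

/-!
Put `D = u - u^q` and `A = u - u^{q²}`, so that `A = D + D^q`. For every nonzero zero `w` of the
`q`-linearised polynomial `L(w) = D w^{q²} - A w^q + D^q w`, the element `A w^q / (D^q w)` is a
root of `X^{q+1} - BX + B` with `B = A^{q+1} / D^{q²+1}`.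

If `u ∉ 𝔽_{q²}`, then `L` vanishes on the `𝔽_q`-span of `1` and `u`, and its points `u + a`
(`a ∈ 𝔽_q`) and `1`, which are pairwise independent over `𝔽_q`, give `q + 1` distinct roots.

Conversely, a split polynomial `X^{q+1} - BX + B` is separable (its derivative is `X^q - B`), so it
has three distinct roots `x, y, z`. For `u = (z - x) / (y - z)` one finds `u^q = u y / x` and
`D^q (x - 1) = D`, so `x` is the root attached to `w = 1`, and comparing `x^{q+1} = B (x - 1)` with
the root equation for `A^{q+1} / D^{q²+1}` identifies `B`.
-/

namespace Polynomial

variable {R : Type*} [CommRing R] [IsDomain R]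

theorem splits_of_natDegree_le_card {f : R[X]} (s : Finset R) (hs : ∀ x ∈ s, f.IsRoot x)
    (hf : f.natDegree ≤ s.card) : f.Splits := by
  classical
  rcases eq_or_ne f 0 with rfl | hf0
  · exact Splits.zero
  refine splits_iff_card_roots.mpr (le_antisymm (card_roots' f) ?_)
  calc f.natDegree ≤ s.card := hf
    _ ≤ f.roots.toFinset.card :=
      Finset.card_le_card fun x hx ↦ Multiset.mem_toFinset.mpr ((mem_roots hf0).mpr (hs x hx))
    _ ≤ Multiset.card f.roots := Multiset.toFinset_card_le _

theorem Splits.exists_three_isRoot {f : R[X]} (hs : f.Splits) (hsep : f.Separable)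
    (hf : 2 < f.natDegree) :
    ∃ x y z, f.IsRoot x ∧ f.IsRoot y ∧ f.IsRoot z ∧ x ≠ y ∧ x ≠ z ∧ y ≠ z := by
  classical
  rw [hs.natDegree_eq_card_roots, ← Multiset.toFinset_card_of_nodup (nodup_roots hsep),
    Finset.two_lt_card] at hf
  obtain ⟨x, hx, y, hy, z, hz, hxy, hxz, hyz⟩ := hf
  simp only [Multiset.mem_toFinset, mem_roots'] at hx hy hz
  exact ⟨x, y, z, hx.2, hy.2, hz.2, hxy, hxz, hyz⟩

end Polynomial

theorem Subfield.pow_natCard_eq_self {K : Type*} [Field K] {F : Subfield K} [Finite F] {a : K}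
    (ha : a ∈ F) : a ^ Nat.card F = a := by
  have := Fintype.ofFinite F
  rw [Nat.card_eq_fintype_card]
  exact congrArg Subtype.val (FiniteField.pow_card (⟨a, ha⟩ : F))

section

variable {K : Type*} [Field K]

noncomputable def bluherPoly (q : ℕ) (B : K) : K[X] := X ^ (q + 1) - C B * X + C B

theorem isRoot_bluherPoly_iff {q : ℕ} {B x : K} :
    (bluherPoly q B).IsRoot x ↔ x ^ (q + 1) = B * (x - 1) := by
  simp only [bluherPoly, IsRoot, eval_add, eval_sub, eval_mul, eval_pow, eval_C, eval_X]
  constructor <;> intro h <;> linear_combination h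

theorem natDegree_bluherPoly {q : ℕ} (hq : q ≠ 0) (B : K) :
    (bluherPoly q B).natDegree = q + 1 := by
  unfold bluherPoly
  compute_degree!
  simp [hq]

theorem separable_bluherPoly {q : ℕ} (hq : (q : K) = 0) {B : K} (hB : B ≠ 0) :
    (bluherPoly q B).Separable := by
  have hder : derivative (bluherPoly q B) = X ^ q - C B := by
    simp [bluherPoly, hq]
  have hBB : C B⁻¹ * C B = 1 := by rw [← C_mul, inv_mul_cancel₀ hB, C_1]
  refine ⟨C B⁻¹, -(C B⁻¹ * X), ?_⟩
  rw [hder, bluherPoly, pow_succ]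
  linear_combination hBB

theorem ne_zero_of_isRoot_bluherPoly {q : ℕ} {B x : K} (hB : B ≠ 0)
    (hx : (bluherPoly q B).IsRoot x) : x ≠ 0 := by
  rintro rfl
  rw [isRoot_bluherPoly_iff, zero_pow q.succ_ne_zero] at hx
  exact hB (by linear_combination hx)

theorem ne_one_of_isRoot_bluherPoly {q : ℕ} {B x : K} (hx : (bluherPoly q B).IsRoot x) :
    x ≠ 1 := by
  rintro rfl
  rw [isRoot_bluherPoly_iff] at hx
  simp at hx

theorem pow_eq_of_isRoot_bluherPoly {q : ℕ} {B x : K} (hB : B ≠ 0)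
    (hx : (bluherPoly q B).IsRoot x) : x ^ q = B * (x - 1) / x := by
  rw [eq_div_iff (ne_zero_of_isRoot_bluherPoly hB hx), ← pow_succ]
  exact isRoot_bluherPoly_iff.mp hx

theorem pow_succ_eq_of_linearized {q : ℕ} {A D w x : K} (hD : D ≠ 0) (hw : w ≠ 0)
    (hL : D * w ^ q ^ 2 - A * w ^ q + D ^ q * w = 0) (hx : x = A * w ^ q / (D ^ q * w)) :
    x ^ (q + 1) = A ^ (q + 1) / D ^ (q ^ 2 + 1) * (x - 1) := by
  have hx1 : x - 1 = D * w ^ q ^ 2 / (D ^ q * w) := by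
    rw [hx]; field_simp; linear_combination -hL
  rw [hx1, hx, pow_succ, div_pow, mul_pow, mul_pow, ← pow_mul, ← pow_mul, ← sq]
  field_simp
  ring

theorem div_pow_eq_self_of_mul_pow_div_eq {q : ℕ} {A D v w : K} (hA : A ≠ 0) (hD : D ≠ 0)
    (hv : v ≠ 0) (hw : w ≠ 0) (h : A * v ^ q / (D ^ q * v) = A * w ^ q / (D ^ q * w)) :
    (v / w) ^ q = v / w := by
  rw [div_eq_div_iff (by positivity) (by positivity)] at h
  rw [div_pow, div_eq_div_iff (by positivity) hw]
  have : A * D ^ q * (v ^ q * w - v * w ^ q) = 0 := by linear_combination h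
  simpa [hA, hD, sub_eq_zero] using this

theorem pow_ne_self_of_pow_sq_ne {q : ℕ} {u : K} (hu : u ^ q ^ 2 ≠ u) : u ^ q ≠ u :=
  fun h ↦ hu (by rw [sq, pow_mul, h, h])

variable {p : ℕ} [ExpChar K p] {n q : ℕ}

theorem sub_pow_sq_eq (hq : q = p ^ n) (u : K) :
    u - u ^ q ^ 2 = (u - u ^ q) + (u - u ^ q) ^ q := by
  subst hq; rw [sub_pow_expChar_pow, sq, pow_mul]; ring

theorem eq_of_mul_add_eq_mul_add (hq : q = p ^ n) {u α β γ δ : K} (hu : u ^ q ≠ u)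
    (hα : α ^ q = α) (hβ : β ^ q = β) (hγ : γ ^ q = γ) (hδ : δ ^ q = δ)
    (h : α * u + β = γ * u + δ) : α = γ := by
  have hfrob : α * u ^ q + β = γ * u ^ q + δ := by
    have := congrArg (· ^ q) h
    subst hq
    simpa only [add_pow_expChar_pow, mul_pow, hα, hβ, hγ, hδ] using this
  have : (α - γ) * (u ^ q - u) = 0 := by linear_combination hfrob - h
  exact sub_eq_zero.mp ((mul_eq_zero.mp this).resolve_right (sub_ne_zero.mpr hu))

theorem linearized_eq_zero (hq : q = p ^ n) (u : K) {a b : K} (ha : a ^ q = a)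
    (hb : b ^ q = b) :
    (u - u ^ q) * (b * u + a) ^ q ^ 2 - (u - u ^ q ^ 2) * (b * u + a) ^ q
      + (u - u ^ q) ^ q * (b * u + a) = 0 := by
  have hw : (b * u + a) ^ q = b * u ^ q + a := by
    subst hq; rw [add_pow_expChar_pow, mul_pow, ha, hb]
  have hw2 : (b * u + a) ^ q ^ 2 = b * u ^ q ^ 2 + a := by
    rw [sq, pow_mul, hw]; subst hq; rw [add_pow_expChar_pow, mul_pow, ha, hb, pow_mul]
  have hD : (u - u ^ q) ^ q = u ^ q - u ^ q ^ 2 := by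
    subst hq; rw [sub_pow_expChar_pow, sq, pow_mul]
  rw [hw, hw2, hD]; ring

theorem splits_bluherPoly (hq : q = p ^ n) {u : K} (hu : u ^ q ^ 2 ≠ u) (s : Finset K)
    (hs : s.card = q) (hfix : ∀ a ∈ s, a ^ q = a) :
    (bluherPoly q ((u - u ^ q ^ 2) ^ (q + 1) / (u - u ^ q) ^ (q ^ 2 + 1))).Splits := by
  classical
  have hq0 : q ≠ 0 := hq ▸ (expChar_pow_pos K p n).ne'
  have huq := pow_ne_self_of_pow_sq_ne hu
  set A := u - u ^ q ^ 2
  set D := u - u ^ q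
  have hA : A ≠ 0 := sub_ne_zero.mpr hu.symm
  have hD : D ≠ 0 := sub_ne_zero.mpr huq.symm
  set g : K → K := fun w ↦ A * w ^ q / (D ^ q * w)
  have hroot {a b : K} (ha : a ^ q = a) (hb : b ^ q = b) (hw : b * u + a ≠ 0) :
      (bluherPoly q (A ^ (q + 1) / D ^ (q ^ 2 + 1))).IsRoot (g (b * u + a)) :=
    isRoot_bluherPoly_iff.mpr (pow_succ_eq_of_linearized hD hw (linearized_eq_zero hq u ha hb) rfl)
  have hne {a : K} (ha : a ∈ s) : u + a ≠ 0 := fun h ↦ one_ne_zero <|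
    eq_of_mul_add_eq_mul_add hq huq (one_pow q) (hfix a ha) (zero_pow hq0) (zero_pow hq0)
      (by rw [one_mul, zero_mul, zero_add, h])
  have hinj : Set.InjOn (fun a ↦ g (u + a)) s := by
    intro a ha b hb h
    have hc := div_pow_eq_self_of_mul_pow_div_eq hA hD (hne ha) (hne hb) h
    have hcb : ((u + a) / (u + b) * b) ^ q = (u + a) / (u + b) * b := by
      rw [mul_pow, hc, hfix b hb]
    have := eq_of_mul_add_eq_mul_add hq huq hc hcb (one_pow q) (hfix a ha)
      (by rw [← mul_add, div_mul_cancel₀ _ (hne hb), one_mul])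
    simpa [div_eq_one_iff_eq (hne hb)] using this
  have hg1 : g 1 ∉ s.image fun a ↦ g (u + a) := by
    simp only [Finset.mem_image, not_exists, not_and]
    intro a ha h
    have hc := div_pow_eq_self_of_mul_pow_div_eq hA hD (hne ha) one_ne_zero h
    rw [div_one] at hc
    exact one_ne_zero <| eq_of_mul_add_eq_mul_add hq huq (one_pow q) (hfix a ha) (zero_pow hq0) hc
      (by rw [zero_mul, zero_add, one_mul])
  refine splits_of_natDegree_le_card (insert (g 1) (s.image fun a ↦ g (u + a))) ?_ ?_
  · simp only [Finset.mem_insert, Finset.mem_image]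
    rintro x (rfl | ⟨a, ha, rfl⟩)
    · have := hroot (one_pow q) (zero_pow hq0) (by simp)
      rwa [zero_mul, zero_add] at this
    · have := hroot (hfix a ha) (one_pow q) (by simpa using hne ha)
      rwa [one_mul] at this
  · rw [natDegree_bluherPoly hq0, Finset.card_insert_of_notMem hg1,
      Finset.card_image_of_injOn hinj, hs]

theorem exists_eq_of_isRoot_bluherPoly (hq : q = p ^ n) {B x y z : K} (hB : B ≠ 0)
    (hx : (bluherPoly q B).IsRoot x) (hy : (bluherPoly q B).IsRoot y)
    (hz : (bluherPoly q B).IsRoot z) (hxy : x ≠ y) (hxz : x ≠ z) (hyz : y ≠ z) :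
    ∃ u : K, u ^ q ^ 2 ≠ u ∧ B = (u - u ^ q ^ 2) ^ (q + 1) / (u - u ^ q) ^ (q ^ 2 + 1) := by
  have hx0 := ne_zero_of_isRoot_bluherPoly hB hx
  have hxq := pow_eq_of_isRoot_bluherPoly hB hx
  have hyq := pow_eq_of_isRoot_bluherPoly hB hy
  have hzq := pow_eq_of_isRoot_bluherPoly hB hz
  have hx1 : x - 1 ≠ 0 := sub_ne_zero.mpr (ne_one_of_isRoot_bluherPoly hx)
  have hyz' : y - z ≠ 0 := sub_ne_zero.mpr hyz
  have hy0 := ne_zero_of_isRoot_bluherPoly hB hy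
  have hz0 := ne_zero_of_isRoot_bluherPoly hB hz
  set u := (z - x) / (y - z)
  have huq : u ^ q = u * y / x := by
    subst hq
    rw [div_pow, sub_pow_expChar_pow, sub_pow_expChar_pow, hxq, hyq, hzq]
    field_simp
    ring
  set D := u - u ^ q with hDdef
  have hD : D = u * (x - y) / x := by rw [hDdef, huq]; field_simp
  have hD0 : D ≠ 0 := by
    rw [hD]
    exact div_ne_zero (mul_ne_zero (div_ne_zero (sub_ne_zero.mpr hxz.symm) hyz')
      (sub_ne_zero.mpr hxy)) hx0
  have hDq : D ^ q * (x - 1) = D := by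
    rw [hD, div_pow, mul_pow, huq, hxq]
    subst hq
    rw [sub_pow_expChar_pow, hxq, hyq]
    field_simp
    ring
  have hA : u - u ^ q ^ 2 = D + D ^ q := sub_pow_sq_eq hq u
  refine ⟨u, fun h ↦ ?_, ?_⟩
  · have : x * D ^ q = 0 := by linear_combination hDq - hA - h
    exact mul_ne_zero hx0 (pow_ne_zero q hD0) this
  · have hL : D * 1 ^ q ^ 2 - (u - u ^ q ^ 2) * 1 ^ q + D ^ q * 1 = 0 := by
      rw [hA]; ring
    have hxA : x = (u - u ^ q ^ 2) * 1 ^ q / (D ^ q * 1) := by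
      rw [hA, one_pow, mul_one, mul_one, eq_div_iff (pow_ne_zero q hD0)]
      linear_combination hDq
    have h := pow_succ_eq_of_linearized hD0 one_ne_zero hL hxA
    rw [isRoot_bluherPoly_iff.mp hx] at h
    exact mul_right_cancel₀ hx1 h

end

theorem stmt_1_general (q : ℕ)
    (K : Type) [Field K] [Fintype K]
    (Fq : Subfield K) (hFq : Nat.card Fq = q)
    (B : K) (hB : B ≠ 0) :
    Splits (X ^ (q + 1) - C B * X + C B) ↔
      ∃ u : K, u ^ q ^ 2 ≠ u ∧
        B = (u - u ^ q ^ 2) ^ (q + 1) / (u - u ^ q) ^ (q ^ 2 + 1) := by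
  classical
  obtain ⟨n, hp, hq⟩ := FiniteField.card Fq (ringChar K)
  have := Fact.mk hp
  rw [← Nat.card_eq_fintype_card, hFq] at hq
  have hcard : (Fq : Set K).toFinset.card = q := by
    rw [Set.toFinset_card, ← Nat.card_eq_fintype_card, Nat.card_coe_set_eq, ← hFq]; rfl
  have hfix (a : K) (ha : a ∈ (Fq : Set K).toFinset) : a ^ q = a :=
    hFq ▸ Subfield.pow_natCard_eq_self (Set.mem_toFinset.mp ha)
  constructor
  · intro h
    have hqK : (q : K) = 0 := by
      rw [hq, Nat.cast_pow, CharP.cast_eq_zero, zero_pow n.ne_zero]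
    have h2q : 2 < (bluherPoly q B).natDegree := by
      rw [natDegree_bluherPoly (hq ▸ pow_ne_zero _ hp.ne_zero)]
      have := hq ▸ Nat.one_lt_pow n.ne_zero hp.one_lt
      omega
    obtain ⟨x, y, z, hx, hy, hz, hxy, hxz, hyz⟩ :=
      h.exists_three_isRoot (separable_bluherPoly hqK hB) h2q
    exact exists_eq_of_isRoot_bluherPoly hq hB hx hy hz hxy hxz hyz
  · rintro ⟨u, hu, rfl⟩
    exact splits_bluherPoly hq hu _ hcard hfix

/-- Characterisation of the `B` for which `X^{q+1} - BX + B` splits completely over a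
finite field `K` containing `F_q`. -/
theorem stmt_1 (q : ℕ) (hq : IsPrimePow q)
    (K : Type) [Field K] [Fintype K]
    (Fq : Subfield K) (hFq : Nat.card Fq = q)
    (B : K) (hB : B ≠ 0) :
    Splits (X ^ (q + 1) - C B * X + C B) ↔
      ∃ u : K, u ^ q ^ 2 ≠ u ∧
        B = (u - u ^ q ^ 2) ^ (q + 1) / (u - u ^ q) ^ (q ^ 2 + 1) :=
  stmt_1_general q K Fq hFq B hB
end

section
/- Let q be a prime power and K a finite field containing F_q. Define φ(u) = (u − u^{q²})^{q+1} / (u − u^q)^{q²+1} for those u ∈ K with u^{q²} ≠ u. Then for every such u the number of u' ∈ K with u'^{q²} ≠ u' and φ(u') = φ(u) is exactly q³ − q; that is, φ is (q³ − q)-to-1 on {u ∈ K : u^{q²} ≠ u}. -/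
/-!
The group PGL(2, F_q) acts on `K ∖ F_{q²}` by Möbius transformations
`v = (a u + b) / (c u + d)`, and `φ` is invariant: with `e = ad - bc` and `w = cu + d` one has
`v - v^{q^i} = e (u - u^{q^i}) / (w w^{q^i})`, and `e`, `w` cancel in `φ` because `e^q = e` and
`(q + 1)(q² + 1)` is symmetric in the two exponents. Two matrices giving the same image of `u` are
proportional, since otherwise `u` satisfies a nonzero quadratic over `F_q` and so lies in `F_{q²}`;
hence every fiber has at least `|PGL(2, q)| = q³ - q` elements. Conversely the fiber of `c` lies in
the roots of `(X - X^{q²})^{q+1} - c (X - X^q)^{q²+1}`, of degree `(q + 1) q²`, and every element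
of `F_q` is a root of multiplicity at least `q + 1`, so at most `q³ - q` roots remain.
-/

open Polynomial

def frobRatio {K : Type*} [Field K] (q : ℕ) (u : K) : K :=
  (u - u ^ q ^ 2) ^ (q + 1) / (u - u ^ q) ^ (q ^ 2 + 1)

theorem eq_zero_of_quadratic_eq_zero {K : Type*} [Field K] (σ : K →+* K) {u α β γ : K}
    (hu : σ (σ u) ≠ u) (hα : σ α = α) (hβ : σ β = β) (hγ : σ γ = γ)
    (h : α * u ^ 2 + β * u + γ = 0) : α = 0 ∧ β = 0 ∧ γ = 0 := by
  have h₁ : α * σ u ^ 2 + β * σ u + γ = 0 := by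
    simpa [hα, hβ, hγ] using congrArg σ h
  have h₂ : α * σ (σ u) ^ 2 + β * σ (σ u) + γ = 0 := by
    simpa [hα, hβ, hγ] using congrArg σ h₁
  have hne₀₁ : u - σ u ≠ 0 := sub_ne_zero.2 fun h' => hu (by rw [← h', ← h'])
  have hne₁₂ : σ u - σ (σ u) ≠ 0 := by
    rw [← map_sub]; exact (map_ne_zero σ).2 hne₀₁
  have hne₀₂ : u - σ (σ u) ≠ 0 := sub_ne_zero.2 (Ne.symm hu)
  have d₁ : α * (u + σ u) + β = 0 :=
    mul_left_cancel₀ hne₀₁ (by linear_combination h - h₁)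
  have d₂ : α * (σ u + σ (σ u)) + β = 0 :=
    mul_left_cancel₀ hne₁₂ (by linear_combination h₁ - h₂)
  have hα0 : α = 0 := mul_left_cancel₀ hne₀₂ (by linear_combination d₁ - d₂)
  have hβ0 : β = 0 := by linear_combination d₁ - (u + σ u) * hα0
  exact ⟨hα0, hβ0, by linear_combination h - u ^ 2 * hα0 - u * hβ0⟩

theorem pow_div_pow_of_scaled {K : Type*} [Field K] (q : ℕ) {e W : K} (A B : K) (he0 : e ≠ 0)
    (he : e ^ q = e) (hW : W ≠ 0) :
    (e * A / (W * W ^ q ^ 2)) ^ (q + 1) / (e * B / (W * W ^ q)) ^ (q ^ 2 + 1)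
      = A ^ (q + 1) / B ^ (q ^ 2 + 1) := by
  have he' : e ^ (q ^ 2 + 1) = e ^ (q + 1) := by
    rw [sq q, pow_succ, pow_succ, pow_mul, he, he]
  have hW' : (W * W ^ q ^ 2) ^ (q + 1) = (W * W ^ q) ^ (q ^ 2 + 1) := by ring
  rw [div_pow, div_pow, mul_pow e A, mul_pow e B, he', hW',
    div_div_div_cancel_right₀ (pow_ne_zero _ (mul_ne_zero hW (pow_ne_zero _ hW))),
    mul_div_mul_left _ _ (pow_ne_zero _ he0)]

section Mobius

variable {F K : Type*} [Field F] [Field K] [Algebra F K]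

def mobius (a b c d : F) (u : K) : K :=
  (algebraMap F K a * u + algebraMap F K b) / (algebraMap F K c * u + algebraMap F K d)

theorem mobius_sub_algHom_apply (τ : K →ₐ[F] K) (a b c d : F) {u : K}
    (hw : algebraMap F K c * u + algebraMap F K d ≠ 0) :
    mobius a b c d u - τ (mobius a b c d u)
      = algebraMap F K (a * d - b * c) * (u - τ u)
        / ((algebraMap F K c * u + algebraMap F K d)
          * τ (algebraMap F K c * u + algebraMap F K d)) := by
  have hτw := (_root_.map_ne_zero τ).2 hw
  simp only [mobius, map_div₀, map_add, map_mul, map_sub, AlgHom.commutes] at hτw ⊢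
  rw [div_sub_div _ _ hw hτw]
  ring

end Mobius

section FiberPolynomial

variable {K : Type*} [Field K]

theorem card_add_mul_card_le_natDegree {p : K[X]} (hp : p ≠ 0) {T S : Finset K} {m : ℕ}
    (hTS : Disjoint T S) (hT : ∀ x ∈ T, p.IsRoot x) (hS : ∀ x ∈ S, (X - C x) ^ m ∣ p) :
    T.card + m * S.card ≤ p.natDegree := by
  classical
  have hle : T.val + m • S.val ≤ p.roots := by
    refine Multiset.le_iff_count.2 fun x => ?_
    rw [Multiset.count_add, Multiset.count_nsmul, count_roots]
    by_cases hxT : x ∈ T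
    · rw [Multiset.count_eq_one_of_mem T.nodup hxT,
        Multiset.count_eq_zero_of_notMem (Finset.disjoint_left.1 hTS hxT), mul_zero, add_zero]
      exact (rootMultiplicity_pos hp).2 (hT x hxT)
    rw [Multiset.count_eq_zero_of_notMem hxT, zero_add]
    by_cases hxS : x ∈ S
    · rw [Multiset.count_eq_one_of_mem S.nodup hxS, mul_one]
      exact (le_rootMultiplicity_iff hp).2 (hS x hxS)
    · rw [Multiset.count_eq_zero_of_notMem hxS, mul_zero]
      exact Nat.zero_le _
  simpa using (Multiset.card_le_card hle).trans (card_roots' p)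

noncomputable def frobRatioPoly (q : ℕ) (c : K) : K[X] :=
  (X - X ^ q ^ 2) ^ (q + 1) - C c * (X - X ^ q) ^ (q ^ 2 + 1)

theorem natDegree_frobRatioPoly {q : ℕ} (hq : 2 ≤ q) (c : K) :
    (frobRatioPoly q c).natDegree = (q + 1) * q ^ 2 := by
  have hdeg {n : ℕ} (hn : 1 < n) : ((X : K[X]) - X ^ n).natDegree = n := by
    rw [natDegree_sub_eq_right_of_natDegree_lt] <;> simp [hn]
  have hA : ((X - X ^ q ^ 2) ^ (q + 1) : K[X]).natDegree = (q + 1) * q ^ 2 := by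
    rw [natDegree_pow, hdeg (by nlinarith)]
  have hB : (C c * (X - X ^ q) ^ (q ^ 2 + 1)).natDegree ≤ (q ^ 2 + 1) * q :=
    (natDegree_C_mul_le _ _).trans (by rw [natDegree_pow, hdeg (by omega)])
  rw [frobRatioPoly, natDegree_sub_eq_left_of_natDegree_lt, hA]
  rw [hA]
  exact hB.trans_lt (by nlinarith)

theorem frobRatioPoly_ne_zero {q : ℕ} (hq : 2 ≤ q) (c : K) : frobRatioPoly q c ≠ 0 :=
  ne_zero_of_natDegree_gt (n := 0) (by rw [natDegree_frobRatioPoly hq]; positivity)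

theorem isRoot_frobRatioPoly {q : ℕ} {v : K} (hv : v ^ q ≠ v) :
    (frobRatioPoly q (frobRatio q v)).IsRoot v := by
  simp only [IsRoot.def, frobRatioPoly, frobRatio, eval_sub, eval_mul, eval_C, eval_pow, eval_X]
  rw [div_mul_cancel₀ _ (pow_ne_zero _ (sub_ne_zero.2 (Ne.symm hv))), sub_self]

theorem X_sub_C_pow_dvd_frobRatioPoly {q : ℕ} {x : K} (hx : x ^ q = x) (c : K) :
    (X - C x) ^ (q + 1) ∣ frobRatioPoly q c := by
  have hx₂ : x ^ q ^ 2 = x := by rw [sq, pow_mul, hx, hx]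
  have h₁ : X - C x ∣ (X - X ^ q : K[X]) := dvd_iff_isRoot.2 (by simp [hx])
  have h₂ : X - C x ∣ (X - X ^ q ^ 2 : K[X]) := dvd_iff_isRoot.2 (by simp [hx₂])
  have hq : q + 1 ≤ q ^ 2 + 1 := by nlinarith [Nat.le_self_pow two_ne_zero q]
  exact dvd_sub (pow_dvd_pow_of_dvd h₂ _)
    (dvd_mul_of_dvd_right ((pow_dvd_pow _ hq).trans (pow_dvd_pow_of_dvd h₁ _)) _)

end FiberPolynomial

section OverFiniteField

variable {F K : Type*} [Field F] [Fintype F] [Field K] [Algebra F K]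

local notation "q" => Fintype.card F

theorem frobeniusAlgHom_apply_apply (x : K) :
    FiniteField.frobeniusAlgHom F K (FiniteField.frobeniusAlgHom F K x) = x ^ q ^ 2 := by
  simp only [FiniteField.coe_frobeniusAlgHom, ← pow_mul, sq]

theorem eq_zero_of_algebraMap_quadratic_eq_zero {u : K} (hu : u ^ q ^ 2 ≠ u) {a b c : F}
    (h : algebraMap F K a * u ^ 2 + algebraMap F K b * u + algebraMap F K c = 0) :
    a = 0 ∧ b = 0 ∧ c = 0 := by
  let σ : K →+* K := FiniteField.frobeniusAlgHom F K
  have hσ (x : F) : σ (algebraMap F K x) = algebraMap F K x :=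
    (FiniteField.frobeniusAlgHom F K).commutes x
  obtain ⟨ha, hb, hc⟩ := eq_zero_of_quadratic_eq_zero σ
    (by rwa [← frobeniusAlgHom_apply_apply] at hu) (hσ a) (hσ b) (hσ c) h
  simp only [map_eq_zero_iff _ (algebraMap F K).injective] at ha hb hc
  exact ⟨ha, hb, hc⟩

theorem mobius_denom_ne_zero {u : K} (hu : u ^ q ^ 2 ≠ u) {c d : F} (hcd : c ≠ 0 ∨ d ≠ 0) :
    algebraMap F K c * u + algebraMap F K d ≠ 0 := by
  intro h
  obtain ⟨-, hc, hd⟩ := eq_zero_of_algebraMap_quadratic_eq_zero hu (a := 0) (b := c) (c := d)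
    (by simpa using h)
  tauto

theorem frobRatio_mobius {u : K} (hu : u ^ q ^ 2 ≠ u) {a b c d : F} (hdet : a * d - b * c ≠ 0) :
    mobius a b c d u ^ q ^ 2 ≠ mobius a b c d u
      ∧ frobRatio q (mobius a b c d u) = frobRatio q u := by
  have hw : algebraMap F K c * u + algebraMap F K d ≠ 0 :=
    mobius_denom_ne_zero hu (by by_contra! h; simp [h.1, h.2] at hdet)
  have h₁ := mobius_sub_algHom_apply (FiniteField.frobeniusAlgHom F K) a b c d hw
  have h₂ := mobius_sub_algHom_apply
    ((FiniteField.frobeniusAlgHom F K).comp (FiniteField.frobeniusAlgHom F K)) a b c d hw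
  simp only [AlgHom.comp_apply, frobeniusAlgHom_apply_apply] at h₂
  simp only [FiniteField.coe_frobeniusAlgHom] at h₁
  have he : algebraMap F K (a * d - b * c) ^ q = algebraMap F K (a * d - b * c) := by
    rw [← map_pow, FiniteField.pow_card]
  constructor
  · rw [ne_comm, ← sub_ne_zero, h₂]
    exact div_ne_zero (mul_ne_zero ((_root_.map_ne_zero _).2 hdet) (sub_ne_zero.2 (Ne.symm hu)))
      (mul_ne_zero hw (pow_ne_zero _ hw))
  · rw [frobRatio, h₁, h₂]
    exact pow_div_pow_of_scaled q _ _ ((_root_.map_ne_zero _).2 hdet) he hw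

theorem mobius_eq_mobius {u : K} (hu : u ^ q ^ 2 ≠ u) {a b c d a' b' c' d' : F}
    (hw : algebraMap F K c * u + algebraMap F K d ≠ 0)
    (hw' : algebraMap F K c' * u + algebraMap F K d' ≠ 0)
    (h : mobius a b c d u = mobius a' b' c' d' u) :
    a * c' = a' * c ∧ a * d' + b * c' = a' * d + b' * c ∧ b * d' = b' * d := by
  rw [mobius, mobius, div_eq_div_iff hw hw'] at h
  obtain ⟨h₂, h₁, h₀⟩ := eq_zero_of_algebraMap_quadratic_eq_zero hu
    (a := a * c' - a' * c) (b := a * d' + b * c' - (a' * d + b' * c)) (c := b * d' - b' * d)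
    (by simp only [map_sub, map_add, map_mul]; linear_combination h)
  exact ⟨sub_eq_zero.1 h₂, sub_eq_zero.1 h₁, sub_eq_zero.1 h₀⟩

/-- The images of `u` under the representatives `[[e, b], [0, 1]]` (`e ≠ 0`) and
`[[a, a d - e], [1, d]]` (determinant `e ≠ 0`) of the elements of `PGL(2, F)`. -/
def pglNormalForm (u : K) : Option F × F × Fˣ → K
  | (none, b, e) => mobius (e : F) b 0 1 u
  | (some d, a, e) => mobius a (a * d - e) 1 d u

theorem pglNormalForm_mem_fiber {u : K} (hu : u ^ q ^ 2 ≠ u) (i : Option F × F × Fˣ) :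
    pglNormalForm u i ^ q ^ 2 ≠ pglNormalForm u i
      ∧ frobRatio q (pglNormalForm u i) = frobRatio q u := by
  obtain ⟨_ | d, b, e⟩ := i <;> refine frobRatio_mobius hu ?_
  · simp
  · rw [mul_one, sub_sub_cancel]
    exact e.ne_zero

theorem pglNormalForm_injective {u : K} (hu : u ^ q ^ 2 ≠ u) :
    Function.Injective (pglNormalForm (F := F) u) := by
  have hw (d : F) : algebraMap F K 1 * u + algebraMap F K d ≠ 0 :=
    mobius_denom_ne_zero hu (Or.inl one_ne_zero)
  have hw₀ : algebraMap F K 0 * u + algebraMap F K 1 ≠ 0 :=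
    mobius_denom_ne_zero hu (Or.inr one_ne_zero)
  rintro ⟨_ | d, b, e⟩ ⟨_ | d', b', e'⟩ h <;> simp only [pglNormalForm] at h
  · obtain ⟨-, he, hb⟩ := mobius_eq_mobius hu hw₀ hw₀ h
    simp only [mul_one, mul_zero, add_zero] at he hb
    rw [Units.val_inj] at he
    rw [he, hb]
  · obtain ⟨ha, -, -⟩ := mobius_eq_mobius hu hw₀ (hw d') h
    simp at ha
  · obtain ⟨ha, -, -⟩ := mobius_eq_mobius hu (hw d) hw₀ h
    simp only [mul_one, mul_zero] at ha
    exact absurd ha.symm e'.ne_zero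
  · obtain ⟨ha, he, hd⟩ := mobius_eq_mobius hu (hw d) (hw d') h
    simp only [mul_one] at ha he hd
    subst ha
    obtain rfl : e = e' := Units.val_injective (by linear_combination -he)
    obtain rfl : d = d' := mul_left_cancel₀ e.ne_zero (by linear_combination hd)
    rfl

theorem card_pglNormalForm_domain : Nat.card (Option F × F × Fˣ) = q ^ 3 - q := by
  rw [Nat.card_prod, Nat.card_prod, Finite.card_option, Nat.card_units, Nat.card_eq_fintype_card]
  obtain ⟨n, hn⟩ : ∃ n, q = n + 1 := Nat.exists_eq_succ_of_ne_zero Fintype.card_ne_zero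
  rw [hn, Nat.add_sub_cancel]
  zify [Nat.le_self_pow (n := 3) (by norm_num) (n + 1)]
  ring

theorem le_card_frobRatio_fiber [Finite K] {u : K} (hu : u ^ q ^ 2 ≠ u) :
    q ^ 3 - q ≤ Nat.card {v : K // v ^ q ^ 2 ≠ v ∧ frobRatio q v = frobRatio q u} := by
  rw [← card_pglNormalForm_domain]
  exact Nat.card_le_card_of_injective (fun i => ⟨_, pglNormalForm_mem_fiber hu i⟩)
    fun i j h => pglNormalForm_injective hu (congrArg Subtype.val h)

theorem card_frobRatio_fiber_le [Finite K] (c : K) :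
    Nat.card {v : K // v ^ q ^ 2 ≠ v ∧ frobRatio q v = c} ≤ q ^ 3 - q := by
  classical
  have := Fintype.ofFinite K
  have hq : 2 ≤ q := Fintype.one_lt_card
  let S : Finset K := Finset.univ.map ⟨algebraMap F K, (algebraMap F K).injective⟩
  have hS : ∀ x ∈ S, x ^ q = x := by
    simp only [S, Finset.mem_map, Finset.mem_univ, true_and, Function.Embedding.coeFn_mk]
    rintro _ ⟨a, rfl⟩
    rw [← map_pow, FiniteField.pow_card]
  have hfix {x : K} (hx : x ^ q = x) : x ^ q ^ 2 = x := by rw [sq, pow_mul, hx, hx]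
  let T := Finset.univ.filter fun v : K => v ^ q ^ 2 ≠ v ∧ frobRatio q v = c
  have hcount := card_add_mul_card_le_natDegree (frobRatioPoly_ne_zero hq c) (T := T) (S := S)
    (Finset.disjoint_left.2 fun x hxT hxS => (Finset.mem_filter.1 hxT).2.1 (hfix (hS x hxS)))
    (fun x hx => by
      obtain ⟨hx₂, rfl⟩ := (Finset.mem_filter.1 hx).2
      exact isRoot_frobRatioPoly fun h => hx₂ (hfix h))
    (fun x hx => X_sub_C_pow_dvd_frobRatioPoly (hS x hx) c)
  rw [natDegree_frobRatioPoly hq, Finset.card_map, Finset.card_univ] at hcount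
  rw [Nat.card_eq_fintype_card, Fintype.card_subtype]
  exact Nat.le_sub_of_add_le (by nlinarith)

end OverFiniteField

theorem stmt_2_general (q : ℕ)
    (K : Type) [Field K] [Fintype K]
    (Fq : Subfield K) (hFq : Nat.card Fq = q)
    (u : K) (hu : u ^ q ^ 2 ≠ u) :
    Nat.card {u' : K // u' ^ q ^ 2 ≠ u' ∧
        (u' - u' ^ q ^ 2) ^ (q + 1) / (u' - u' ^ q) ^ (q ^ 2 + 1)
          = (u - u ^ q ^ 2) ^ (q + 1) / (u - u ^ q) ^ (q ^ 2 + 1)}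
      = q ^ 3 - q := by
  have := Fintype.ofFinite Fq
  obtain rfl : Fintype.card Fq = q := Nat.card_eq_fintype_card.symm.trans hFq
  exact le_antisymm (card_frobRatio_fiber_le _) (le_card_frobRatio_fiber hu)

/-- The map `u ↦ (u - u^{q²})^{q+1} / (u - u^q)^{q²+1}` is `(q³ - q)`-to-one on
`{u ∈ K : u^{q²} ≠ u}`, for a finite field `K` containing `F_q`. -/
theorem stmt_2 (q : ℕ) (hq : IsPrimePow q)
    (K : Type) [Field K] [Fintype K]
    (Fq : Subfield K) (hFq : Nat.card Fq = q)
    (u : K) (hu : u ^ q ^ 2 ≠ u) :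
    Nat.card {u' : K // u' ^ q ^ 2 ≠ u' ∧
        (u' - u' ^ q ^ 2) ^ (q + 1) / (u' - u' ^ q) ^ (q ^ 2 + 1)
          = (u - u ^ q ^ 2) ^ (q + 1) / (u - u ^ q) ^ (q ^ 2 + 1)}
      = q ^ 3 - q :=
  stmt_2_general q K Fq hFq u hu
end

section
/- Let q be a prime power, K a finite field containing F_q, and a, b, c ∈ K with c ≠ ab and b ≠ a^q. Set B = (b − a^q)^{q+1} / (c − ab)^q. If the polynomial X^{q+1} − BX + B splits completely into linear factors over K, then the polynomial X^{q+1} + aX^q + bX + c also splits completely into linear factors over K. -/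
open Polynomial

/-!
With `t = (a^q - b) / (c - ab)` one has `B = (a^q - b) t^q = (c - ab) t^{q+1}`, and since
`(X + a)^q = X^q + a^q` (`q` being a power of the characteristic), substituting
`X ↦ t (X + a)` turns `X^{q+1} - BX + B` into `t^{q+1} (X^{q+1} + aX^q + bX + c)`.
A linear substitution preserves splitting.
-/

theorem Subfield.exists_nat_card_eq_ringExpChar_pow {K : Type*} [Field K] (F : Subfield K)
    [Finite F] : ∃ n : ℕ, Nat.card F = ringExpChar K ^ n := by
  have : Fintype F := Fintype.ofFinite F
  obtain ⟨p, _, n, hp, hcard⟩ := FiniteField.card' F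
  have : ExpChar F p := .prime hp
  have : ExpChar K p := expChar_of_injective_algebraMap (algebraMap F K).injective p
  exact ⟨n, by rw [Nat.card_eq_fintype_card, hcard, ringExpChar.eq K p]⟩

section ExpChar

variable {R : Type*} [CommRing R] (p : ℕ) [ExpChar R p] (n : ℕ)

theorem neg_pow_expChar_pow_add_one (x : R) : (-x) ^ (p ^ n + 1) = x ^ (p ^ n + 1) := by
  rw [neg_pow, pow_succ, neg_one_pow_expChar_pow]
  ring

theorem X_pow_add_one_sub_C_mul_X_add_C_comp {a b c t : R}
    (ht : t * (c - a * b) = a ^ p ^ n - b) :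
    (X ^ (p ^ n + 1) - C ((a ^ p ^ n - b) * t ^ p ^ n) * X
        + C ((a ^ p ^ n - b) * t ^ p ^ n)).comp (C t * (X + C a)) =
      C (t ^ (p ^ n + 1)) * (X ^ (p ^ n + 1) + C a * X ^ p ^ n + C b * X + C c) := by
  have hC : C t * (C c - C a * C b) = C a ^ p ^ n - C b := by
    simpa only [map_mul, map_sub, map_pow] using congrArg C ht
  simp only [add_comp, sub_comp, mul_comp, pow_comp, X_comp, C_comp, mul_pow, pow_succ (X + C a),
    add_pow_expChar_pow, map_mul, map_sub, map_pow]
  linear_combination (-(C t) ^ p ^ n) * hC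

end ExpChar

theorem stmt_3_general (q : ℕ)
    (K : Type) [Field K] [Fintype K]
    (Fq : Subfield K) (hFq : Nat.card Fq = q)
    (a b c : K) (hc : c ≠ a * b) (hb : b ≠ a ^ q)
    (B : K) (hB : B = (b - a ^ q) ^ (q + 1) / (c - a * b) ^ q)
    (hsplit : Splits (X ^ (q + 1) - C B * X + C B)) :
    Splits (X ^ (q + 1) + C a * X ^ q + C b * X + C c) := by
  obtain ⟨n, hn⟩ := Fq.exists_nat_card_eq_ringExpChar_pow
  subst hFq
  rw [hn] at hB hb hsplit ⊢
  set q := ringExpChar K ^ n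
  have hab : c - a * b ≠ 0 := sub_ne_zero.2 hc
  set t := (a ^ q - b) / (c - a * b)
  have ht : t ≠ 0 := div_ne_zero (sub_ne_zero.2 hb.symm) hab
  have hB' : B = (a ^ q - b) * t ^ q := by
    rw [hB, ← neg_sub, neg_pow_expChar_pow_add_one, div_pow, pow_succ', mul_div_assoc]
  have hsub := (hsplit.comp_of_degree_le_one (g := C t * (X + C a))
    (by rw [degree_C_mul ht, degree_X_add_C])).C_mul (t ^ (q + 1))⁻¹
  rwa [hB', X_pow_add_one_sub_C_mul_X_add_C_comp _ _ (div_mul_cancel₀ _ hab), ← mul_assoc,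
    ← C_mul, inv_mul_cancel₀ (pow_ne_zero _ ht), C_1, one_mul] at hsub

/-- If `X^{q+1} - BX + B` splits completely over `K` for
`B = (b - a^q)^{q+1} / (c - ab)^q`, then `X^{q+1} + aX^q + bX + c` also splits
completely over `K`. -/
theorem stmt_3 (q : ℕ) (hq : IsPrimePow q)
    (K : Type) [Field K] [Fintype K]
    (Fq : Subfield K) (hFq : Nat.card Fq = q)
    (a b c : K) (hc : c ≠ a * b) (hb : b ≠ a ^ q)
    (B : K) (hB : B = (b - a ^ q) ^ (q + 1) / (c - a * b) ^ q)
    (hsplit : Splits (X ^ (q + 1) - C B * X + C B)) :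
    Splits (X ^ (q + 1) + C a * X ^ q + C b * X + C c) :=
  stmt_3_general q K Fq hFq a b c hc hb B hB hsplit
end

section
/- Let q be a prime power, k, d positive integers, K = F_{q^{kd}}, and h₀, h₁ ∈ F_{q^k}[X] coprime polynomials of degree at most 2. Let Q ∈ K[X] be an irreducible quadratic polynomial and u₀, u₁, v₀, v₁ ∈ K such that the pairs (1, u₀X + u₁) and (X, v₀X + v₁) form a K[X]-basis of the lattice L_Q (so that Q is a nonzero scalar multiple of −u₀X² + (v₀ − u₁)X + v₁). Set α = −u₀ and δ = −v₀, and let −ρ₁, −ρ₂ ∈ F_{q^{2kd}} be the roots of Q. If ρ₁^q + αρ₂ + δ = 0, then Q divides h₁X^q − h₀ in K[X]. -/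
/-!
Put `P = X ^ q + u₀ X + u₁`. Since `(1, u₀X + u₁) ∈ L_Q`, the identity
`h₁X^q - h₀ = h₁P - (h₀ + (u₀X + u₁)h₁)` reduces the claim to `Q ∣ P`, and as `Q` is irreducible
over `K` it suffices that `P` vanishes at the root `-ρ₁` of `Q`. Comparing the linear coefficients
of the two descriptions of `Q` gives `u₁ = u₀(ρ₁ + ρ₂) + v₀`, and in characteristic `p` (with `q` a
power of `p`) `(-ρ₁)^q = -ρ₁^q`, so `P(-ρ₁) = -(ρ₁^q - u₀ρ₂ - v₀) = 0`.
-/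

open Polynomial

theorem Polynomial.dvd_of_irreducible_of_eval₂_eq_zero {K L : Type*} [Field K] [CommRing L]
    [Nontrivial L] (g : K →+* L) {Q P : K[X]} (hQ : Irreducible Q) {x : L}
    (hQx : Q.eval₂ g x = 0) (hPx : P.eval₂ g x = 0) : Q ∣ P := by
  by_contra hQP
  obtain ⟨a, b, hab⟩ := hQ.coprime_iff_not_dvd.mpr hQP
  simpa [hQx, hPx] using congrArg (eval₂ g x) hab

theorem Polynomial.coeff_X_eq_of_quadratic_eq_C_mul_prod {R : Type*} [CommRing R]
    {a b c l ρ₁ ρ₂ : R}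
    (h : C a * X ^ 2 + C b * X + C c = C l * ((X + C ρ₁) * (X + C ρ₂))) :
    b = a * (ρ₁ + ρ₂) := by
  have hexpand : C a * X ^ 2 + C b * X + C c
      = C l * X ^ 2 + C (l * (ρ₁ + ρ₂)) * X + C (l * ρ₁ * ρ₂) := by
    rw [h]; simp only [map_add, map_mul]; ring
  have ha : a = l := by simpa using congrArg (coeff · 2) hexpand
  have hb : b = l * (ρ₁ + ρ₂) := by simpa using congrArg (coeff · 1) hexpand
  rw [ha, hb]

theorem neg_pow_of_card_eq_pow {L : Type*} [Field L] [Fintype L] {q n : ℕ} (hq : IsPrimePow q)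
    (hL : Fintype.card L = q ^ n) (x : L) : (-x) ^ q = -x ^ q := by
  obtain ⟨p, e, hp, -, rfl⟩ := hq
  have : Fact p.Prime := ⟨hp.nat_prime⟩
  have : CharP L p := charP_of_card_eq_prime_pow (f := e * n) (by rw [hL, pow_mul])
  rw [neg_pow, neg_one_pow_char_pow, neg_one_mul]

theorem stmt_5_general (q k d : ℕ) (hq : IsPrimePow q)
    (F0 : Type) [Field F0]
    (K : Type) [Field K]
    (f : F0 →+* K)
    (L : Type) [Field L] [Fintype L] (hL : Fintype.card L = q ^ (2 * k * d))
    (g : K →+* L)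
    (h₀ h₁ : F0[X])
    (Q : K[X]) (hQirr : Irreducible Q)
    (u₀ u₁ v₀ v₁ : K)
    -- the pairs `(1, u₀X + u₁)` and `(X, v₀X + v₁)` form a `K[X]`-basis of
    -- the lattice `L_Q = {(w₀, w₁) : Q ∣ w₀h₀ + w₁h₁}`
    (hbasis : ∀ w : K[X] × K[X],
      Q ∣ w.1 * h₀.map f + w.2 * h₁.map f ↔
      ∃ r s : K[X], w.1 = r + s * X ∧
        w.2 = r * (C u₀ * X + C u₁) + s * (C v₀ * X + C v₁))
    -- so that `Q` is a nonzero scalar multiple of `-u₀X² + (v₀ - u₁)X + v₁`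
    (cQ : K) (hcQ : cQ ≠ 0)
    (hQform : Q = C cQ * (-(C u₀) * X ^ 2 + C (v₀ - u₁) * X + C v₁))
    -- `-ρ₁`, `-ρ₂` in the quadratic extension `L` are the roots of `Q`
    (ρ₁ ρ₂ : L)
    (hQroots : Q.map g = C (g Q.leadingCoeff) * ((X + C ρ₁) * (X + C ρ₂)))
    (hcond : ρ₁ ^ q + g (-u₀) * ρ₂ + g (-v₀) = 0) :
    Q ∣ h₁.map f * X ^ q - h₀.map f := by
  have hmap : Q.map g = C (-(g cQ * g u₀)) * X ^ 2 + C (g cQ * (g v₀ - g u₁)) * X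
      + C (g cQ * g v₁) := by
    simp only [hQform, Polynomial.map_mul, Polynomial.map_add, Polynomial.map_neg,
      Polynomial.map_pow, Polynomial.map_sub, map_X, map_C, map_sub, map_neg, map_mul]
    ring
  have hvieta : g u₁ = g u₀ * (ρ₁ + ρ₂) + g v₀ := by
    have h := coeff_X_eq_of_quadratic_eq_C_mul_prod (hmap.symm.trans hQroots)
    have hsum := mul_left_cancel₀ ((map_ne_zero g).mpr hcQ)
      (h.trans (by ring) : g cQ * (g v₀ - g u₁) = g cQ * -(g u₀ * (ρ₁ + ρ₂)))
    linear_combination -hsum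
  have hQρ : Q.eval₂ g (-ρ₁) = 0 := by
    rw [← eval_map, hQroots]; simp
  have hPρ : (X ^ q + C u₀ * X + C u₁).eval₂ g (-ρ₁) = 0 := by
    rw [map_neg, map_neg] at hcond
    simp only [eval₂_add, eval₂_mul, eval₂_X_pow, eval₂_C, eval₂_X]
    rw [neg_pow_of_card_eq_pow hq hL]
    linear_combination -hcond + hvieta
  have hQP := dvd_of_irreducible_of_eval₂_eq_zero g hQirr hQρ hPρ
  have hlattice : Q ∣ 1 * h₀.map f + (C u₀ * X + C u₁) * h₁.map f :=
    (hbasis (1, C u₀ * X + C u₁)).mpr ⟨1, 0, by ring, by ring⟩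
  have hsplit : h₁.map f * X ^ q - h₀.map f = h₁.map f * (X ^ q + C u₀ * X + C u₁)
      - (1 * h₀.map f + (C u₀ * X + C u₁) * h₁.map f) := by ring
  exact hsplit ▸ dvd_sub (hQP.mul_left _) hlattice

/-- If condition (*) fails, i.e. `ρ₁^q + αρ₂ + δ = 0`, then the irreducible quadratic
`Q` divides `h₁X^q - h₀`, i.e. `Q` is a trap of level `0`. -/
theorem stmt_5 (q k d : ℕ) (hq : IsPrimePow q) (hk : 0 < k) (hd : 0 < d)
    (F0 : Type) [Field F0] [Fintype F0] (hF0 : Fintype.card F0 = q ^ k)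
    (K : Type) [Field K] [Fintype K] (hK : Fintype.card K = q ^ (k * d))
    (f : F0 →+* K)
    (L : Type) [Field L] [Fintype L] (hL : Fintype.card L = q ^ (2 * k * d))
    (g : K →+* L)
    (h₀ h₁ : F0[X]) (hcop : IsCoprime h₀ h₁)
    (hdeg0 : h₀.natDegree ≤ 2) (hdeg1 : h₁.natDegree ≤ 2)
    (Q : K[X]) (hQirr : Irreducible Q) (hQdeg : Q.natDegree = 2)
    (u₀ u₁ v₀ v₁ : K)
    -- the pairs `(1, u₀X + u₁)` and `(X, v₀X + v₁)` form a `K[X]`-basis of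
    -- the lattice `L_Q = {(w₀, w₁) : Q ∣ w₀h₀ + w₁h₁}`
    (hbasis : ∀ w : K[X] × K[X],
      Q ∣ w.1 * h₀.map f + w.2 * h₁.map f ↔
      ∃ r s : K[X], w.1 = r + s * X ∧
        w.2 = r * (C u₀ * X + C u₁) + s * (C v₀ * X + C v₁))
    -- so that `Q` is a nonzero scalar multiple of `-u₀X² + (v₀ - u₁)X + v₁`
    (cQ : K) (hcQ : cQ ≠ 0)
    (hQform : Q = C cQ * (-(C u₀) * X ^ 2 + C (v₀ - u₁) * X + C v₁))
    -- `-ρ₁`, `-ρ₂` in the quadratic extension `L` are the roots of `Q`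
    (ρ₁ ρ₂ : L)
    (hQroots : Q.map g = C (g Q.leadingCoeff) * ((X + C ρ₁) * (X + C ρ₂)))
    (hcond : ρ₁ ^ q + g (-u₀) * ρ₂ + g (-v₀) = 0) :
    Q ∣ h₁.map f * X ^ q - h₀.map f :=
  stmt_5_general q k d hq F0 K f L hL g h₀ h₁ Q hQirr u₀ u₁ v₀ v₁ hbasis cQ hcQ hQform ρ₁ ρ₂ hQroots
    hcond
end

section
/- Let q be a prime power, k, d positive integers, K = F_{q^{kd}}, h₀, h₁ ∈ F_{q^k}[X] coprime of degree at most 2, and Q ∈ K[X] an irreducible quadratic polynomial with K[X]-basis (1, u₀X + u₁), (X, v₀X + v₁) of the lattice L_Q. Let a, a' ∈ K with a ≠ a', and set b = u₀a + v₀, c = u₁a + v₁, b' = u₀a' + v₀, c' = u₁a' + v₁. If X^{q+1} + aX^q + bX + c splits completely into linear factors over K, then the polynomials X^{q+1} + aX^q + bX + c and X^{q+1} + a'X^q + b'X + c' have no common root in an algebraic closure of K. -/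
/-!
Subtracting the two polynomials shows that a common root `τ` satisfies `τ^q = -u₀τ - u₁`;
substituting this into `X^{q+1} + aX^q + bX + c` makes `τ` a root of the determinant
`-u₀X² + (v₀ - u₁)X + v₁` of the lattice basis. Since `(0, Q)` lies in `L_Q`, this determinant
divides `Q`, so `τ` is a root of the irreducible quadratic `Q`. But `τ` is also a root of a
polynomial that splits over `K`, so `τ ∈ K`, which an irreducible quadratic does not allow.
-/

open Polynomial

section Lattice

variable {R : Type*} [CommRing R]

/-- The determinant of the matrix with rows `(1, u₀X + u₁)` and `(X, v₀X + v₁)`. -/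
noncomputable def latticeDet (u₀ u₁ v₀ v₁ : R) : R[X] :=
  -C u₀ * X ^ 2 + C (v₀ - u₁) * X + C v₁

noncomputable def latticePoly (q : ℕ) (u₀ u₁ v₀ v₁ a : R) : R[X] :=
  X ^ (q + 1) + C a * X ^ q + C (u₀ * a + v₀) * X + C (u₁ * a + v₁)

theorem latticePoly_eq (q : ℕ) (u₀ u₁ v₀ v₁ a : R) :
    latticePoly q u₀ u₁ v₀ v₁ a =
      (X + C a) * (X ^ q + C u₀ * X + C u₁) + latticeDet u₀ u₁ v₀ v₁ := by
  simp only [latticePoly, latticeDet, map_add, map_mul, map_sub]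
  ring

theorem latticePoly_monic [Nontrivial R] {q : ℕ} (hq : q ≠ 0) (u₀ u₁ v₀ v₁ a : R) :
    (latticePoly q u₀ u₁ v₀ v₁ a).Monic := by
  unfold latticePoly
  monicity!
  exact fun h => absurd h hq

theorem latticeDet_dvd {Q g₀ g₁ : R[X]} {u₀ u₁ v₀ v₁ : R}
    (hspan : ∀ w : R[X] × R[X], Q ∣ w.1 * g₀ + w.2 * g₁ →
      ∃ r s : R[X], w.1 = r + s * X ∧
        w.2 = r * (C u₀ * X + C u₁) + s * (C v₀ * X + C v₁)) :
    latticeDet u₀ u₁ v₀ v₁ ∣ Q := by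
  obtain ⟨r, s, hr, hs⟩ := hspan (0, Q) (by simp)
  refine ⟨s, ?_⟩
  simp only [latticeDet, map_sub] at hr hs ⊢
  linear_combination hs - (C u₀ * X + C u₁) * hr

end Lattice

theorem aeval_latticeDet_eq_zero_of_common_root {K L : Type*} [Field K] [Field L] [Algebra K L]
    {q : ℕ} {u₀ u₁ v₀ v₁ a a' : K} (haa : a ≠ a') {τ : L}
    (ha : aeval τ (latticePoly q u₀ u₁ v₀ v₁ a) = 0)
    (ha' : aeval τ (latticePoly q u₀ u₁ v₀ v₁ a') = 0) :
    aeval τ (latticeDet u₀ u₁ v₀ v₁) = 0 := by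
  rw [latticePoly_eq, map_add, map_mul] at ha ha'
  generalize aeval τ (X ^ q + C u₀ * X + C u₁ : K[X]) = e at ha ha'
  have hdiff : (algebraMap K L a - algebraMap K L a') * e = 0 := by
    simp only [map_add, aeval_X, aeval_C] at ha ha'
    linear_combination ha - ha'
  have he : e = 0 :=
    (mul_eq_zero.mp hdiff).resolve_left (sub_ne_zero.mpr ((algebraMap K L).injective.ne haa))
  rwa [he, mul_zero, zero_add] at ha

theorem Irreducible.natDegree_eq_one_of_aeval_eq_zero_of_splits {K L : Type*} [Field K] [Field L]
    [Algebra K L] {Q p : K[X]} (hQ : Irreducible Q) (hp : p.Splits) (hp0 : p ≠ 0) {τ : L}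
    (hQτ : aeval τ Q = 0) (hpτ : aeval τ p = 0) : Q.natDegree = 1 := by
  have hτ : IsIntegral K τ := IsAlgebraic.isIntegral ⟨Q, hQ.ne_zero, hQτ⟩
  have hmin : Associated (minpoly K τ) Q :=
    (minpoly.irreducible hτ).associated_of_dvd hQ (minpoly.dvd K τ hQτ)
  rw [← natDegree_eq_of_degree_eq (degree_eq_degree_of_associated hmin)]
  exact (hp.of_dvd hp0 (minpoly.dvd K τ hpτ)).natDegree_eq_one_of_irreducible
    (minpoly.irreducible hτ)

theorem stmt_7_general (q : ℕ) (hq : IsPrimePow q)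
    (F0 : Type) [Field F0]
    (K : Type) [Field K]
    (f : F0 →+* K)
    (h₀ h₁ : F0[X])
    (Q : K[X]) (hQirr : Irreducible Q) (hQdeg : Q.natDegree = 2)
    (u₀ u₁ v₀ v₁ : K)
    -- the pairs `(1, u₀X + u₁)` and `(X, v₀X + v₁)` form a `K[X]`-basis of
    -- the lattice `L_Q = {(w₀, w₁) : Q ∣ w₀h₀ + w₁h₁}`
    (hbasis : ∀ w : K[X] × K[X],
      Q ∣ w.1 * h₀.map f + w.2 * h₁.map f ↔
      ∃ r s : K[X], w.1 = r + s * X ∧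
        w.2 = r * (C u₀ * X + C u₁) + s * (C v₀ * X + C v₁))
    (a a' : K) (haa : a ≠ a')
    (hsplit : Splits
      (X ^ (q + 1) + C a * X ^ q + C (u₀ * a + v₀) * X + C (u₁ * a + v₁))) :
    ∀ τ : AlgebraicClosure K,
      ¬ (Polynomial.aeval τ
            (X ^ (q + 1) + C a * X ^ q + C (u₀ * a + v₀) * X + C (u₁ * a + v₁) : K[X]) = 0 ∧
         Polynomial.aeval τ
            (X ^ (q + 1) + C a' * X ^ q + C (u₀ * a' + v₀) * X + C (u₁ * a' + v₁) : K[X]) = 0) := by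
  rintro τ ⟨ha, ha'⟩
  have hdet := aeval_latticeDet_eq_zero_of_common_root (q := q) haa ha ha'
  obtain ⟨s, hQ⟩ := latticeDet_dvd fun w => (hbasis w).mp
  have hQτ : aeval τ Q = 0 := by rw [hQ, map_mul, hdet, zero_mul]
  have hQlinear := hQirr.natDegree_eq_one_of_aeval_eq_zero_of_splits hsplit
    (latticePoly_monic hq.ne_zero u₀ u₁ v₀ v₁ a).ne_zero hQτ ha
  omega

/-- Proposition 7 (first part): for two distinct solutions `a ≠ a'`, the polynomials
`𝒫_a mod f₁ = X^{q+1} + aX^q + bX + c` and `𝒫_{a'} mod f₁ = X^{q+1} + a'X^q + b'X + c'`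
have no common root in an algebraic closure of `K`. -/
theorem stmt_7 (q k d : ℕ) (hq : IsPrimePow q) (hk : 0 < k) (hd : 0 < d)
    (F0 : Type) [Field F0] [Fintype F0] (hF0 : Fintype.card F0 = q ^ k)
    (K : Type) [Field K] [Fintype K] (hK : Fintype.card K = q ^ (k * d))
    (f : F0 →+* K)
    (h₀ h₁ : F0[X]) (hcop : IsCoprime h₀ h₁)
    (hdeg0 : h₀.natDegree ≤ 2) (hdeg1 : h₁.natDegree ≤ 2)
    (Q : K[X]) (hQirr : Irreducible Q) (hQdeg : Q.natDegree = 2)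
    (u₀ u₁ v₀ v₁ : K)
    -- the pairs `(1, u₀X + u₁)` and `(X, v₀X + v₁)` form a `K[X]`-basis of
    -- the lattice `L_Q = {(w₀, w₁) : Q ∣ w₀h₀ + w₁h₁}`
    (hbasis : ∀ w : K[X] × K[X],
      Q ∣ w.1 * h₀.map f + w.2 * h₁.map f ↔
      ∃ r s : K[X], w.1 = r + s * X ∧
        w.2 = r * (C u₀ * X + C u₁) + s * (C v₀ * X + C v₁))
    (a a' : K) (haa : a ≠ a')
    (hsplit : Splits
      (X ^ (q + 1) + C a * X ^ q + C (u₀ * a + v₀) * X + C (u₁ * a + v₁))) :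
    ∀ τ : AlgebraicClosure K,
      ¬ (Polynomial.aeval τ
            (X ^ (q + 1) + C a * X ^ q + C (u₀ * a + v₀) * X + C (u₁ * a + v₁) : K[X]) = 0 ∧
         Polynomial.aeval τ
            (X ^ (q + 1) + C a' * X ^ q + C (u₀ * a' + v₀) * X + C (u₁ * a' + v₁) : K[X]) = 0) :=
  stmt_7_general q hq F0 K f h₀ h₁ Q hQirr hQdeg u₀ u₁ v₀ v₁ hbasis a a' haa hsplit
end

section
/- Let q > 2 be a prime power, K a field containing F_q, Ω an algebraically closed field containing K, α, δ ∈ K with α ≠ 0, and ρ₁, ρ₂ ∈ Ω. Set F = α(A − ρ₁)(A − ρ₂) ∈ Ω[A] and G = A^q + αA + δ ∈ Ω[A]. Suppose p₀, p₁ ∈ Ω[A] are coprime polynomials with max(deg p₀, deg p₁) = 1 and p₀ monic, satisfying (Σ_{i=0}^{q} p₀^i p₁^{q−i})^{q+1} · F^q = p₁^q p₀^q (p₀ − p₁)^{q²−q} G^{q+1} in Ω[A]. Then ρ₁^q + αρ₂ + δ = 0 or ρ₂^q + αρ₁ + δ = 0. -/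
open Polynomial

private lemma rm_pow {R : Type*} [CommRing R] [IsDomain R] {p : R[X]} (hp : p ≠ 0) (n : ℕ)
    (x : R) : rootMultiplicity x (p ^ n) = n * rootMultiplicity x p := by
  induction n with
  | zero =>
      rw [pow_zero, Nat.zero_mul]
      exact rootMultiplicity_eq_zero (by simp [IsRoot])
  | succ n ih =>
      rw [pow_succ, rootMultiplicity_mul (mul_ne_zero (pow_ne_zero _ hp) hp), ih]
      ring

/-- The cyclic case: if coprime `p₀, p₁` with `max(deg p₀, deg p₁) = 1`, `p₀` monic,
satisfy `((p₀^{q+1} - p₁^{q+1})/(p₀ - p₁))^{q+1} F^q = p₁^q p₀^q (p₀ - p₁)^{q²-q} G^{q+1}`,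
then condition (*) fails (up to swapping `ρ₁` and `ρ₂`). -/
theorem stmt_13 (q : ℕ) (hq : IsPrimePow q) (hq2 : 2 < q)
    (Ω : Type) [Field Ω] [IsAlgClosed Ω]
    (Fq K : Subfield Ω) (hsub : Fq ≤ K) (hFq : Nat.card Fq = q)
    (α δ : Ω) (hαK : α ∈ K) (hδK : δ ∈ K) (hα : α ≠ 0)
    (ρ₁ ρ₂ : Ω)
    (p₀ p₁ : Polynomial Ω) (hcop : IsCoprime p₀ p₁)
    (hdeg : max p₀.degree p₁.degree = 1) (hmonic : p₀.Monic)
    (hid : (∑ i ∈ Finset.range (q + 1), p₀ ^ i * p₁ ^ (q - i)) ^ (q + 1)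
          * (C α * (X - C ρ₁) * (X - C ρ₂)) ^ q
        = p₁ ^ q * p₀ ^ q * (p₀ - p₁) ^ (q ^ 2 - q)
          * (X ^ q + C α * X + C δ) ^ (q + 1)) :
    ρ₁ ^ q + α * ρ₂ + δ = 0 ∨ ρ₂ ^ q + α * ρ₁ + δ = 0 := by
  classical
  -- characteristic facts
  haveI : Finite Fq := Nat.finite_of_card_ne_zero (by omega)
  haveI : Fintype Fq := Fintype.ofFinite _
  haveI : CharP Fq (ringChar Fq) := ringChar.charP Fq
  obtain ⟨n, hpprime, hcard⟩ := FiniteField.card Fq (ringChar Fq)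
  haveI : CharP Ω (ringChar Fq) :=
    charP_of_injective_ringHom (f := Fq.subtype) Subtype.coe_injective (ringChar Fq)
  haveI : Fact (ringChar Fq).Prime := ⟨hpprime⟩
  have hqpn : q = (ringChar Fq) ^ (n : ℕ) := by
    rw [← hFq, Nat.card_eq_fintype_card, hcard]
  have hqΩ : (q : Ω) = 0 := by
    rw [hqpn]
    push_cast
    rw [CharP.cast_eq_zero Ω (ringChar Fq)]
    exact zero_pow n.pos.ne'
  have hfrob : ∀ x y : Ω, (x - y) ^ q = x ^ q - y ^ q := by
    intro x y
    rw [hqpn]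
    exact sub_pow_char_pow x y _
  set S : Polynomial Ω := ∑ i ∈ Finset.range (q + 1), p₀ ^ i * p₁ ^ (q - i) with hSdef
  set G : Polynomial Ω := X ^ q + C α * X + C δ with hGdef
  -- nonzeroness
  have hp₀ne : p₀ ≠ 0 := hmonic.ne_zero
  have hp₁ne : p₁ ≠ 0 := by
    intro h
    have hu := isCoprime_zero_right.mp (h ▸ hcop)
    have h0 : p₀.degree = 0 := degree_eq_zero_of_isUnit hu
    rw [h, degree_zero, h0] at hdeg
    simp at hdeg
  have hdne : p₀ - p₁ ≠ 0 := by
    intro h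
    have he : p₀ = p₁ := sub_eq_zero.mp h
    have hu : IsUnit p₀ := isCoprime_self.mp (he ▸ hcop)
    have h0 : p₀.degree = 0 := degree_eq_zero_of_isUnit hu
    rw [← he, h0] at hdeg
    simp at hdeg
  have hlinlt : (C α * X + C δ).degree < (q : WithBot ℕ) :=
    degree_linear_le.trans_lt (by exact_mod_cast (by omega : 1 < q))
  have hGmonic : G.Monic := by
    have := monic_X_pow_add (p := C α * X + C δ) (n := q) hlinlt
    rwa [hGdef, add_assoc]
  have hGne : G ≠ 0 := hGmonic.ne_zero
  have hGdeg : G.degree = q := by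
    rw [hGdef, add_assoc]
    rw [degree_add_eq_left_of_degree_lt, degree_X_pow]
    rwa [degree_X_pow]
  have hGnat : G.natDegree = q := natDegree_eq_of_degree_eq_some hGdeg
  have hGder : G.derivative = C α := by
    rw [hGdef]
    simp [derivative_X_pow, hqΩ]
  have hGsep : G.Separable := by
    rw [Polynomial.Separable, hGder]
    exact ⟨0, C α⁻¹, by rw [zero_mul, zero_add, ← C_mul, inv_mul_cancel₀ hα, C_1]⟩
  have hmG : ∀ x, rootMultiplicity x G ≤ 1 := by
    intro x
    rw [← count_roots]
    exact Multiset.nodup_iff_count_le_one.mp (nodup_roots hGsep) x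
  have hXρ₁ : (X - C ρ₁ : Polynomial Ω) ≠ 0 := X_sub_C_ne_zero ρ₁
  have hXρ₂ : (X - C ρ₂ : Polynomial Ω) ≠ 0 := X_sub_C_ne_zero ρ₂
  have hCα : (C α : Polynomial Ω) ≠ 0 := fun h => hα (by simpa using congrArg (fun p => p.coeff 0) h)
  have hF1 : C α * (X - C ρ₁) ≠ 0 := mul_ne_zero hCα hXρ₁
  have hFne : C α * (X - C ρ₁) * (X - C ρ₂) ≠ 0 := mul_ne_zero hF1 hXρ₂
  have hSne : S ≠ 0 := by
    intro h
    rw [h, zero_pow (by omega), zero_mul] at hid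
    exact (mul_ne_zero (mul_ne_zero (mul_ne_zero (pow_ne_zero _ hp₁ne) (pow_ne_zero _ hp₀ne))
      (pow_ne_zero _ hdne)) (pow_ne_zero _ hGne)) hid.symm
  have master : ∀ x : Ω,
      (q+1) * rootMultiplicity x S
        + q * (rootMultiplicity x (X - C ρ₁) + rootMultiplicity x (X - C ρ₂))
      = q * rootMultiplicity x p₁ + q * rootMultiplicity x p₀
        + (q^2 - q) * rootMultiplicity x (p₀ - p₁) + (q+1) * rootMultiplicity x G := by
    intro x
    have h := congrArg (rootMultiplicity x) hid
    rw [rootMultiplicity_mul (mul_ne_zero (pow_ne_zero _ hSne) (pow_ne_zero _ hFne)),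
        rm_pow hSne, rm_pow hFne,
        rootMultiplicity_mul hFne, rootMultiplicity_mul hF1,
        rootMultiplicity_eq_zero (not_isRoot_C _ _ hα), zero_add,
        rootMultiplicity_mul (mul_ne_zero (mul_ne_zero (mul_ne_zero (pow_ne_zero _ hp₁ne)
          (pow_ne_zero _ hp₀ne)) (pow_ne_zero _ hdne)) (pow_ne_zero _ hGne)),
        rootMultiplicity_mul (mul_ne_zero (mul_ne_zero (pow_ne_zero _ hp₁ne)
          (pow_ne_zero _ hp₀ne)) (pow_ne_zero _ hdne)),
        rootMultiplicity_mul (mul_ne_zero (pow_ne_zero _ hp₁ne) (pow_ne_zero _ hp₀ne)),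
        rm_pow hp₁ne, rm_pow hp₀ne, rm_pow hdne, rm_pow hGne] at h
    omega
  -- evaluation helpers
  have hnc : ∀ x : Ω, p₀.eval x = 0 → p₁.eval x ≠ 0 := by
    intro x h0 h1
    obtain ⟨u, v, huv⟩ := hcop
    have h := congrArg (Polynomial.eval x) huv
    simp [h0, h1] at h
  have hSeval : ∀ x : Ω,
      S.eval x = ∑ i ∈ Finset.range (q+1), (p₀.eval x)^i * (p₁.eval x)^(q-i) := by
    intro x
    rw [hSdef]
    simp [eval_finset_sum]
  have hsum_same : ∀ v : Ω, (∑ i ∈ Finset.range (q+1), v^i * v^(q-i)) = v^q := by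
    intro v
    have h1 : ∀ i ∈ Finset.range (q+1), v^i * v^(q-i) = v^q := by
      intro i hi
      rw [← pow_add]
      congr 1
      have := Finset.mem_range.mp hi
      omega
    rw [Finset.sum_congr rfl h1, Finset.sum_const, Finset.card_range, nsmul_eq_mul]
    push_cast
    rw [hqΩ]
    ring
  have hsum_left : ∀ v : Ω, (∑ i ∈ Finset.range (q+1), (0:Ω)^i * v^(q-i)) = v^q := by
    intro v
    rw [Finset.sum_range_succ']
    simp
  have hsum_right : ∀ v : Ω, (∑ i ∈ Finset.range (q+1), v^i * (0:Ω)^(q-i)) = v^q := by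
    intro v
    rw [Finset.sum_range_succ]
    have h1 : ∀ i ∈ Finset.range q, v^i * (0:Ω)^(q-i) = 0 := by
      intro i hi
      rw [zero_pow (by have := Finset.mem_range.mp hi; omega), mul_zero]
    rw [Finset.sum_congr rfl h1, Finset.sum_const, smul_zero, zero_add, Nat.sub_self,
      pow_zero, mul_one]
  -- arithmetic helper
  have keyq : ∀ E mid mG : ℕ, mG ≤ 1 → q * E = q * mid + (q+1) * mG → mG = 0 ∧ E = mid := by
    intro E mid mG hle heq
    interval_cases mG
    · simp only [Nat.mul_zero, Nat.add_zero] at heq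
      exact ⟨rfl, Nat.eq_of_mul_eq_mul_left (by omega) heq⟩
    · exfalso
      have h1 : q * E = q * (mid + 1) + 1 := by rw [Nat.mul_add, Nat.mul_one]; omega
      have h3 : q ∣ 1 := by
        have hd := Nat.dvd_sub (dvd_mul_right q E) (dvd_mul_right q (mid+1))
        rwa [h1, Nat.add_sub_cancel_left] at hd
      have := Nat.le_of_dvd one_pos h3
      omega
  have hq2q : q^2 - q = q * (q - 1) := by
    obtain ⟨m, rfl⟩ : ∃ m, q = m + 1 := ⟨q - 1, by omega⟩
    have h1 : (m+1)^2 = (m+1)*m + (m+1) := by ring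
    have h2 : (m+1)*(m+1-1) = (m+1)*m := by norm_num
    omega
  have hnc' : ∀ x : Ω, p₁.eval x = 0 → p₀.eval x ≠ 0 := by
    intro x h0 h1
    exact hnc x h1 h0
  by_cases hroot : ∃ w : Ω, (p₀ - p₁).eval w = 0
  · -- BAD CASE: p₀ - p₁ has a root w
    exfalso
    obtain ⟨w, hw⟩ := hroot
    have hvw : p₀.eval w = p₁.eval w := by
      rw [eval_sub] at hw
      exact sub_eq_zero.mp hw
    have hv0 : p₀.eval w ≠ 0 := fun h => hnc w h (hvw ▸ h)
    have hv0' : p₁.eval w ≠ 0 := hvw ▸ hv0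
    have hSw : S.eval w ≠ 0 := by
      rw [hSeval, hvw, hsum_same]
      exact pow_ne_zero _ hv0'
    have hM := master w
    rw [rootMultiplicity_eq_zero (show ¬ IsRoot S w from hSw),
        rootMultiplicity_eq_zero (show ¬ IsRoot p₁ w from hv0'),
        rootMultiplicity_eq_zero (show ¬ IsRoot p₀ w from hv0),
        rootMultiplicity_X_sub_C, rootMultiplicity_X_sub_C, hq2q] at hM
    simp only [Nat.mul_zero, Nat.zero_add, Nat.add_zero, Nat.mul_assoc] at hM
    obtain ⟨hmg0, hE⟩ := keyq _ _ _ (hmG w) hM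
    have hmd1 : 1 ≤ rootMultiplicity w (p₀ - p₁) := (rootMultiplicity_pos hdne).mpr hw
    have hle2 : (q-1) * rootMultiplicity w (p₀ - p₁) ≤ 2 := by
      rw [← hE]
      split_ifs <;> omega
    have hgeq : q - 1 ≤ (q-1) * rootMultiplicity w (p₀ - p₁) :=
      le_mul_of_one_le_right (Nat.zero_le _) hmd1
    have hq3 : q = 3 := by omega
    subst hq3
    have hmd : rootMultiplicity w (p₀ - p₁) = 1 := by omega
    rw [hmd, Nat.mul_one] at hE
    have hw1 : w = ρ₁ := by
      by_contra hc
      rw [if_neg hc] at hE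
      split_ifs at hE <;> omega
    have hw2 : w = ρ₂ := by
      by_contra hc
      rw [if_neg hc] at hE
      split_ifs at hE <;> omega
    -- second point: a root of p₀ or p₁
    have hd1 : p₀.degree = 1 ∨ p₁.degree = 1 := by
      rcases max_choice p₀.degree p₁.degree with h | h
      · exact Or.inl (by rw [← h]; exact hdeg)
      · exact Or.inr (by rw [← h]; exact hdeg)
    have hfin : ∀ y : Ω, p₀.eval y * p₁.eval y = 0 → S.eval y ≠ 0 → False := by
      intro y hy hSy
      have hyw : y ≠ w := by
        intro hyw
        rw [hyw] at hy
        rcases mul_eq_zero.mp hy with h | h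
        exacts [hv0 h, hv0' h]
      have hdy : (p₀ - p₁).eval y ≠ 0 := by
        rw [eval_sub, sub_ne_zero]
        rcases mul_eq_zero.mp hy with h | h
        · rw [h]; exact fun hh => hnc y h hh.symm
        · rw [h]; exact hnc' y h
      have hM2 := master y
      rw [rootMultiplicity_eq_zero (show ¬ IsRoot S y from hSy),
          rootMultiplicity_eq_zero (show ¬ IsRoot (p₀ - p₁) y from hdy),
          rootMultiplicity_X_sub_C, rootMultiplicity_X_sub_C,
          if_neg (show y ≠ ρ₁ by rw [← hw1]; exact hyw),
          if_neg (show y ≠ ρ₂ by rw [← hw2]; exact hyw)] at hM2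
      simp only [Nat.mul_zero, Nat.add_zero, Nat.zero_add] at hM2
      -- hM2 : 0 = 3 * m₁ + 3 * m₀ + (3+1) * mg
      have hroot01 : 1 ≤ rootMultiplicity y p₀ + rootMultiplicity y p₁ := by
        rcases mul_eq_zero.mp hy with h | h
        · have := (rootMultiplicity_pos hp₀ne).mpr (show IsRoot p₀ y from h)
          omega
        · have := (rootMultiplicity_pos hp₁ne).mpr (show IsRoot p₁ y from h)
          omega
      omega
    rcases hd1 with h | h
    · obtain ⟨y, hy⟩ := IsAlgClosed.exists_root (p := p₀) (by rw [h]; exact one_ne_zero)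
      refine hfin y (by rw [show p₀.eval y = 0 from hy, zero_mul]) ?_
      rw [hSeval, show p₀.eval y = 0 from hy, hsum_left]
      exact pow_ne_zero _ (hnc y hy)
    · obtain ⟨y, hy⟩ := IsAlgClosed.exists_root (p := p₁) (by rw [h]; exact one_ne_zero)
      refine hfin y (by rw [show p₁.eval y = 0 from hy, mul_zero]) ?_
      rw [hSeval, show p₁.eval y = 0 from hy, hsum_right]
      exact pow_ne_zero _ (hnc' y hy)
  · -- GOOD CASE: p₀ - p₁ is a nonzero constant
    push_neg at hroot
    have hddeg : (p₀ - p₁).degree = 0 := by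
      rcases eq_or_ne (p₀ - p₁).degree 0 with h | h
      · exact h
      · obtain ⟨w, hw⟩ := IsAlgClosed.exists_root (p := p₀ - p₁) h
        exact absurd hw (hroot w)
    set u := (p₀ - p₁).coeff 0 with hu
    have hdC : p₀ - p₁ = C u := eq_C_of_degree_le_zero (le_of_eq hddeg)
    have hune : u ≠ 0 := by
      intro h
      rw [h, C_0] at hdC
      exact hdne hdC
    have hp₁eq : p₁ = p₀ - C u := by rw [← hdC]; ring
    have hnat₀ : p₀.natDegree = 1 := by
      have hle : p₀.natDegree ≤ 1 :=
        natDegree_le_iff_degree_le.mpr ((le_max_left _ _).trans hdeg.le)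
      by_contra hc
      have h0 : p₀.natDegree = 0 := by omega
      have hdeg₀ : p₀.degree ≤ 0 := by
        rw [degree_eq_natDegree hp₀ne, h0]
        exact le_refl _
      have hdeg₁ : p₁.degree ≤ 0 := by
        rw [hp₁eq]
        exact (degree_sub_le _ _).trans (max_le hdeg₀ degree_C_le)
      have hmax := max_le hdeg₀ hdeg₁
      rw [hdeg] at hmax
      norm_num at hmax
    set a : Ω := -p₀.coeff 0 with ha
    have hp₀X : p₀ = X - C a := by
      rw [ha, map_neg, sub_neg_eq_add]
      exact hmonic.eq_X_add_C hnat₀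
    set e : Ω := a + u with he
    have hp₁X : p₁ = X - C e := by
      rw [hp₁eq, hp₀X, he, C_add]
      ring
    have hae : a ≠ e := by
      intro h
      exact hune (by rw [he] at h; exact (left_eq_add.mp h))
    -- telescoping identity
    have tel : S * (p₀ - p₁) = p₀ ^ (q+1) - p₁ ^ (q+1) := by
      have h := geom_sum₂_mul p₀ p₁ (q+1)
      simp only [Nat.add_sub_cancel] at h
      rw [← hSdef] at h
      exact h
    have htel_eval : ∀ x : Ω, S.eval x * u = (x - a)^(q+1) - (x - e)^(q+1) := by
      intro x
      have h := congrArg (Polynomial.eval x) tel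
      rw [hdC, hp₀X, hp₁X] at h
      simpa using h
    have hSa : S.eval a ≠ 0 := by
      intro h
      have h1 := htel_eval a
      rw [h, zero_mul] at h1
      have h2 : (a - e)^(q+1) = 0 := by
        rw [sub_self, zero_pow (by omega : q + 1 ≠ 0)] at h1
        linear_combination h1
      exact hae (by linear_combination (pow_eq_zero_iff (by omega : q+1 ≠ 0)).mp h2)
    have hSe : S.eval e ≠ 0 := by
      intro h
      have h1 := htel_eval e
      rw [h, zero_mul] at h1
      have h2 : (e - a)^(q+1) = 0 := by
        rw [sub_self, zero_pow (by omega : q + 1 ≠ 0)] at h1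
        linear_combination -h1
      exact hae (by linear_combination -(pow_eq_zero_iff (by omega : q+1 ≠ 0)).mp h2)
    -- master at a
    have hMa := master a
    rw [rootMultiplicity_eq_zero (show ¬ IsRoot S a from hSa),
        rootMultiplicity_eq_zero (show ¬ IsRoot (p₀ - p₁) a from by
          rw [hdC]; simpa [IsRoot] using hune),
        rootMultiplicity_eq_zero (show ¬ IsRoot p₁ a from by
          rw [hp₁X]; simpa [IsRoot, sub_eq_zero] using hae),
        show rootMultiplicity a p₀ = 1 from by
          rw [hp₀X]; exact rootMultiplicity_X_sub_C_self,
        rootMultiplicity_X_sub_C, rootMultiplicity_X_sub_C] at hMa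
    obtain ⟨hga, hEa⟩ := keyq ((if a = ρ₁ then 1 else 0) + (if a = ρ₂ then 1 else 0)) 1
      (rootMultiplicity a G) (hmG a) (by omega)
    -- master at e
    have hMe := master e
    rw [rootMultiplicity_eq_zero (show ¬ IsRoot S e from hSe),
        rootMultiplicity_eq_zero (show ¬ IsRoot (p₀ - p₁) e from by
          rw [hdC]; simpa [IsRoot] using hune),
        rootMultiplicity_eq_zero (show ¬ IsRoot p₀ e from by
          rw [hp₀X]; simpa [IsRoot, sub_eq_zero] using (Ne.symm hae)),
        show rootMultiplicity e p₁ = 1 from by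
          rw [hp₁X]; exact rootMultiplicity_X_sub_C_self,
        rootMultiplicity_X_sub_C, rootMultiplicity_X_sub_C] at hMe
    obtain ⟨hge, hEe⟩ := keyq ((if e = ρ₁ then 1 else 0) + (if e = ρ₂ then 1 else 0)) 1
      (rootMultiplicity e G) (hmG e) (by omega)
    -- every root of G is a root of S
    have hSθ : ∀ θ : Ω, G.IsRoot θ → S.eval θ = 0 := by
      intro θ hθ
      have hθa : θ ≠ a := by
        intro h
        have := (rootMultiplicity_pos hGne).mpr (h ▸ hθ)
        omega
      have hθe : θ ≠ e := by
        intro h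
        have := (rootMultiplicity_pos hGne).mpr (h ▸ hθ)
        omega
      by_contra hc
      have hM3 := master θ
      rw [rootMultiplicity_eq_zero (show ¬ IsRoot S θ from hc),
          rootMultiplicity_eq_zero (show ¬ IsRoot (p₀ - p₁) θ from by
            rw [hdC]; simpa [IsRoot] using hune),
          rootMultiplicity_eq_zero (show ¬ IsRoot p₀ θ from by
            rw [hp₀X]; simpa [IsRoot, sub_eq_zero] using hθa),
          rootMultiplicity_eq_zero (show ¬ IsRoot p₁ θ from by
            rw [hp₁X]; simpa [IsRoot, sub_eq_zero] using hθe),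
          show rootMultiplicity θ G = 1 from
            le_antisymm (hmG θ) ((rootMultiplicity_pos hGne).mpr hθ),
          rootMultiplicity_X_sub_C, rootMultiplicity_X_sub_C] at hM3
      have hdvd : q ∣ 1 := by
        have hqE : q * ((if θ = ρ₁ then 1 else 0) + (if θ = ρ₂ then 1 else 0)) = q + 1 := by
          omega
        have hd := Nat.dvd_sub (dvd_mul_right q
          ((if θ = ρ₁ then 1 else 0) + (if θ = ρ₂ then 1 else 0))) (dvd_refl q)
        rwa [hqE, Nat.add_sub_cancel_left] at hd
      have := Nat.le_of_dvd one_pos hdvd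
      omega
    -- two distinct roots of G
    have hcard : Multiset.card G.roots = q := by
      rw [splits_iff_card_roots.mp (IsAlgClosed.splits G)]
      exact hGnat
    obtain ⟨θ₁, hθ₁m⟩ := Multiset.card_pos_iff_exists_mem.mp (show 0 < Multiset.card G.roots
      by omega)
    obtain ⟨t, htt⟩ := Multiset.exists_cons_of_mem hθ₁m
    have hnd := nodup_roots hGsep
    rw [htt, Multiset.nodup_cons] at hnd
    rw [htt, Multiset.card_cons] at hcard
    obtain ⟨θ₂, hθ₂m⟩ := Multiset.card_pos_iff_exists_mem.mp (show 0 < Multiset.card t by omega)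
    have hθ12 : θ₁ ≠ θ₂ := fun h => hnd.1 (h ▸ hθ₂m)
    have hroot1 : G.IsRoot θ₁ := (mem_roots hGne).mp hθ₁m
    have hroot2 : G.IsRoot θ₂ := (mem_roots hGne).mp (by
      rw [htt]
      exact Multiset.mem_cons_of_mem hθ₂m)
    -- the key linear relation at each root
    have hkey : ∀ θ : Ω, G.IsRoot θ →
        (e^q - a^q - α*(e-a))*θ + (a^q*a - e^q*e - δ*(e-a)) = 0 := by
      intro θ hθ
      have h1 := htel_eval θ
      rw [hSθ θ hθ, zero_mul] at h1
      have h2 : (θ - a)^(q+1) = (θ^q - a^q)*(θ - a) := by rw [pow_succ, hfrob]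
      have h3 : (θ - e)^(q+1) = (θ^q - e^q)*(θ - e) := by rw [pow_succ, hfrob]
      have h4 : θ^q + α*θ + δ = 0 := by
        have hh := hθ
        simp only [hGdef, IsRoot.def, eval_add, eval_pow, eval_mul, eval_X, eval_C] at hh
        exact hh
      have h5 : (θ^q - a^q)*(θ - a) - (θ^q - e^q)*(θ - e) = 0 := by
        rw [← h2, ← h3]
        linear_combination -h1
      linear_combination h5 - (e - a) * h4
    have hA : e^q - a^q - α*(e-a) = 0 := by
      have h1 := hkey θ₁ hroot1
      have h2 := hkey θ₂ hroot2
      have h3 : (e^q - a^q - α*(e-a)) * (θ₁ - θ₂) = 0 := by linear_combination h1 - h2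
      rcases mul_eq_zero.mp h3 with h | h
      · exact h
      · exact absurd (sub_eq_zero.mp h) hθ12
    have hB : a^q*a - e^q*e - δ*(e-a) = 0 := by
      have h1 := hkey θ₁ hroot1
      linear_combination h1 - θ₁ * hA
    have hval1 : a^q + α*e + δ = 0 := by
      have h : (a^q + α*e + δ) * (e - a) = 0 := by linear_combination (-e)*hA - hB
      rcases mul_eq_zero.mp h with h' | h'
      · exact h'
      · exact absurd (sub_eq_zero.mp h').symm hae
    have hval2 : e^q + α*a + δ = 0 := by
      have h : (e^q + α*a + δ) * (e - a) = 0 := by linear_combination (-a)*hA - hB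
      rcases mul_eq_zero.mp h with h' | h'
      · exact h'
      · exact absurd (sub_eq_zero.mp h').symm hae
    have ha' : a = ρ₁ ∨ a = ρ₂ := by
      by_contra hc
      push_neg at hc
      rw [if_neg hc.1, if_neg hc.2] at hEa
      omega
    have he' : e = ρ₁ ∨ e = ρ₂ := by
      by_contra hc
      push_neg at hc
      rw [if_neg hc.1, if_neg hc.2] at hEe
      omega
    rcases ha' with h1 | h1 <;> rcases he' with h2 | h2
    · exact absurd (h1.trans h2.symm) hae
    · left
      rw [← h1, ← h2]
      exact hval1
    · left
      rw [← h2, ← h1]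
      exact hval2
    · exact absurd (h1.trans h2.symm) hae
end

section
/- Let q > 2 be a prime power, K a field containing F_q, Ω an algebraically closed field containing K, α, δ ∈ K with α ≠ 0, and ρ₁, ρ₂ ∈ Ω. Set F = α(A − ρ₁)(A − ρ₂) ∈ Ω[A] and G = A^q + αA + δ ∈ Ω[A]. Suppose p₀, p₁ ∈ Ω[A] are coprime polynomials with max(deg p₀, deg p₁) = q and p₁ monic, satisfying (p₀ + p₁)^{q+1} · F^q = p₁ p₀^q G^{q+1} in Ω[A]. Then ρ₁^q + αρ₂ + δ = 0 or ρ₂^q + αρ₁ + δ = 0. -/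
/-!
Write `S = p₀ + p₁` and `G = X ^ q + α X + δ`; `G` is separable because `G' = α`. If some root `β`
of `G` is not a root of `S`, then `(X - β) ^ (q + 1)` divides `F ^ q`, which forces
`ρ₁ = ρ₂ = β`, and `G(β) = 0` is the claim. Otherwise `G ∣ S`, so `S = c G` for degree reasons and
the identity becomes `c ^ (q + 1) F ^ q = p₁ p₀ ^ q`. Comparing degrees gives `deg p₀ = 1` and
`deg p₁ = q`; the root of `p₀` is one of the `ρᵢ`, coprimality forces `p₁ = (X - ρⱼ) ^ q` for the
other index, and evaluating `p₀ + p₁ = c G` at `ρᵢ` with `(ρᵢ - ρⱼ) ^ q = ρᵢ ^ q - ρⱼ ^ q` gives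
`ρⱼ ^ q + α ρᵢ + δ = 0`.
-/

open Polynomial

theorem exists_prime_charP_of_card_subfield {Ω : Type*} [Field Ω] (k : Subfield Ω)
    (hk : Nat.card k ≠ 0) : ∃ p n : ℕ, p.Prime ∧ CharP Ω p ∧ Nat.card k = p ^ n := by
  have := Nat.finite_of_card_ne_zero hk
  have := Fintype.ofFinite k
  have := ringChar.charP k
  obtain ⟨n, hp, hcard⟩ := FiniteField.card k (ringChar k)
  exact ⟨ringChar k, n, hp, charP_of_injective_ringHom k.subtype_injective _,
    by rw [Nat.card_eq_fintype_card, hcard]⟩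

section Polynomial

theorem monic_X_pow_add_C_mul_X_add_C {R : Type*} [Semiring R] {q : ℕ} (hq : 1 < q) (α δ : R) :
    (X ^ q + C α * X + C δ).Monic := by
  rw [add_assoc]
  refine monic_X_pow_add ((degree_linear_le).trans_lt ?_)
  exact_mod_cast hq

theorem natDegree_X_pow_add_C_mul_X_add_C {R : Type*} [Semiring R] [Nontrivial R] {q : ℕ}
    (hq : 1 < q) (α δ : R) :
    (X ^ q + C α * X + C δ).natDegree = q := by
  rw [add_assoc, natDegree_add_eq_left_of_degree_lt, natDegree_X_pow]
  rw [degree_X_pow]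
  exact (degree_linear_le).trans_lt (by exact_mod_cast hq)

theorem eq_and_eq_of_X_sub_C_pow_succ_dvd {R : Type*} [CommRing R] [IsDomain R] {q : ℕ}
    {a β ρ₁ ρ₂ : R} (ha : a ≠ 0)
    (h : (X - C β) ^ (q + 1) ∣ C a * ((X - C ρ₁) * (X - C ρ₂)) ^ q) : β = ρ₁ ∧ β = ρ₂ := by
  classical
  have hne : C a * ((X - C ρ₁) * (X - C ρ₂)) ^ q ≠ 0 := by
    simp [ha, X_sub_C_ne_zero]
  -- the multiplicity of `β` on the right is `q * #{i | β = ρᵢ}`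
  have hmult := (le_rootMultiplicity_iff hne).mpr h
  rw [← count_roots, roots_C_mul _ ha, roots_pow, roots_mul (by simp [X_sub_C_ne_zero]),
    roots_X_sub_C, roots_X_sub_C, Multiset.count_nsmul] at hmult
  simp only [Multiset.singleton_add, Multiset.count_cons, Multiset.count_singleton] at hmult
  split_ifs at hmult with h₂ h₁ h₁ <;> first | exact ⟨h₁, h₂⟩ | omega

variable {K : Type*} [Field K]

theorem separable_X_pow_add_C_mul_X_add_C {p q : ℕ} [CharP K p] (hpq : p ∣ q) {α : K}
    (hα : α ≠ 0) (δ : K) : (X ^ q + C α * X + C δ).Separable := by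
  have hder : derivative (X ^ q + C α * X + C δ) = C α := by
    simp [derivative_X_pow, (CharP.cast_eq_zero_iff K p q).mpr hpq]
  rw [separable_def, hder]
  exact ⟨0, C α⁻¹, by rw [← C_mul, inv_mul_cancel₀ hα, C_1, zero_mul, zero_add]⟩

theorem Polynomial.Separable.dvd_of_forall_isRoot [IsAlgClosed K] {f g : K[X]}
    (hsep : f.Separable) (hf : f.Monic) (h : ∀ x, f.IsRoot x → g.IsRoot x) : f ∣ g := by
  rcases eq_or_ne g 0 with rfl | hg
  · exact dvd_zero f
  rw [(IsAlgClosed.splits f).eq_prod_roots_of_monic hf, Multiset.prod_X_sub_C_dvd_iff_le_roots hg]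
  exact (Multiset.le_iff_subset (nodup_roots hsep)).mpr fun x hx =>
    (mem_roots hg).mpr (h x (isRoot_of_mem_roots hx))

theorem Polynomial.Separable.eq_C_leadingCoeff_mul_of_forall_isRoot [IsAlgClosed K] {f g : K[X]}
    (hsep : f.Separable) (hf : f.Monic) (hdeg : g.natDegree ≤ f.natDegree)
    (h : ∀ x, f.IsRoot x → g.IsRoot x) : g = C g.leadingCoeff * f :=
  eq_leadingCoeff_mul_of_monic_of_dvd_of_natDegree_le hf (hsep.dvd_of_forall_isRoot hf h) hdeg

theorem Polynomial.Monic.eq_X_sub_C_pow_of_forall_isRoot [IsAlgClosed K] {f : K[X]}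
    (hf : f.Monic) {a : K} (h : ∀ x, f.IsRoot x → x = a) : f = (X - C a) ^ f.natDegree := by
  have hroots : f.roots = Multiset.replicate f.natDegree a := by
    rw [Multiset.eq_replicate, ← (IsAlgClosed.splits f).natDegree_eq_card_roots]
    exact ⟨rfl, fun x hx => h x (isRoot_of_mem_roots hx)⟩
  conv_lhs => rw [(IsAlgClosed.splits f).eq_prod_roots_of_monic hf, hroots]
  rw [Multiset.map_replicate, Multiset.prod_replicate]

end Polynomial

section Borel

variable {Ω : Type*} [Field Ω] {q : ℕ} {a c α δ ρ₁ ρ₂ : Ω} {p₀ p₁ : Polynomial Ω}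

theorem natDegree_eq_one_and_eq_of_C_mul_pow_eq (hq : 2 < q) (ha : a ≠ 0) (hp₁ : p₁ ≠ 0)
    (hdeg : max p₀.degree p₁.degree = q)
    (h : C a * ((X - C ρ₁) * (X - C ρ₂)) ^ q = p₁ * p₀ ^ q) :
    p₀.natDegree = 1 ∧ p₁.natDegree = q := by
  have hp₀ : p₀ ≠ 0 := by
    rintro rfl
    simp [zero_pow (by omega : q ≠ 0), ha, X_sub_C_ne_zero] at h
  have hsum : q * 2 = p₁.natDegree + q * p₀.natDegree := by
    have := congrArg natDegree h
    rwa [natDegree_C_mul ha, natDegree_pow, natDegree_mul (X_sub_C_ne_zero _) (X_sub_C_ne_zero _),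
      natDegree_X_sub_C, natDegree_X_sub_C, natDegree_mul hp₁ (pow_ne_zero _ hp₀),
      natDegree_pow] at this
  have hmax : max p₀.natDegree p₁.natDegree = q := by
    rw [degree_eq_natDegree hp₀, degree_eq_natDegree hp₁] at hdeg
    exact WithBot.coe_injective hdeg
  have : p₀.natDegree ≤ 2 := by nlinarith
  interval_cases p₀.natDegree <;> omega

theorem eq_and_eq_of_pow_succ_mul_eq {S P G : Polynomial Ω} {β : Ω} (ha : a ≠ 0)
    (h : S ^ (q + 1) * (C a * ((X - C ρ₁) * (X - C ρ₂)) ^ q) = P * G ^ (q + 1))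
    (hG : G.IsRoot β) (hS : ¬ S.IsRoot β) : β = ρ₁ ∧ β = ρ₂ := by
  have hcop : IsCoprime ((X - C β) ^ (q + 1)) (S ^ (q + 1)) :=
    ((irreducible_X_sub_C β).coprime_iff_not_dvd.mpr (mt dvd_iff_isRoot.mp hS)).pow
  refine eq_and_eq_of_X_sub_C_pow_succ_dvd ha (hcop.dvd_of_dvd_mul_left (h ▸ ?_))
  exact dvd_mul_of_dvd_right (pow_dvd_pow_of_dvd (dvd_iff_isRoot.mpr hG) _) _

theorem exists_C_mul_pow_eq_of_add_eq_C_mul {G : Polynomial Ω} (hq : q ≠ 0) (hmonic : p₁.Monic)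
    (hG : G ≠ 0) (ha : a ≠ 0)
    (h : (p₀ + p₁) ^ (q + 1) * (C a * ((X - C ρ₁) * (X - C ρ₂)) ^ q) = p₁ * p₀ ^ q * G ^ (q + 1))
    (hsum : p₀ + p₁ = C c * G) : ∃ b ≠ 0, C b * ((X - C ρ₁) * (X - C ρ₂)) ^ q = p₁ * p₀ ^ q := by
  have hc : c ≠ 0 := by
    rintro rfl
    have hp₀ : p₀ = 0 := by simpa [hsum, hmonic.ne_zero, hG, hq] using h.symm
    exact hmonic.ne_zero (by simpa [hp₀] using hsum)
  refine ⟨c ^ (q + 1) * a, mul_ne_zero (pow_ne_zero _ hc) ha, ?_⟩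
  refine mul_right_cancel₀ (pow_ne_zero (q + 1) hG) ?_
  rw [← h, hsum, C_mul, C_pow, mul_pow (C c)]
  ring

variable [IsAlgClosed Ω] {p n : ℕ} [ExpChar Ω p]

theorem pow_add_mul_add_eq_zero_of_isRoot (hqp : q = p ^ n) (hq : 1 < q)
    (hcop : IsCoprime p₀ p₁) (hmonic : p₁.Monic) (hd₀ : p₀.natDegree < q) (hd₁ : p₁.natDegree = q)
    (hsum : p₀ + p₁ = C c * (X ^ q + C α * X + C δ))
    (hroots : ∀ x, p₁.IsRoot x → x = ρ₁ ∨ x = ρ₂) (hρ₁ : p₀.IsRoot ρ₁) :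
    ρ₂ ^ q + α * ρ₁ + δ = 0 := by
  have hp₁ρ₁ : ¬ p₁.IsRoot ρ₁ := fun h => not_isUnit_X_sub_C ρ₁ <|
    hcop.isUnit_of_dvd' (dvd_iff_isRoot.mpr hρ₁) (dvd_iff_isRoot.mpr h)
  have hp₁ : p₁ = (X - C ρ₂) ^ q := hd₁ ▸ hmonic.eq_X_sub_C_pow_of_forall_isRoot fun x hx =>
    (hroots x hx).resolve_left (by rintro rfl; exact hp₁ρ₁ hx)
  have hc : c = 1 := by
    have hG := (monic_X_pow_add_C_mul_X_add_C hq α δ).coeff_natDegree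
    rw [natDegree_X_pow_add_C_mul_X_add_C hq] at hG
    have := congrArg (coeff · q) hsum
    simp only [coeff_add, coeff_eq_zero_of_natDegree_lt hd₀, coeff_C_mul, hG] at this
    rwa [← hd₁, hmonic.coeff_natDegree, zero_add, mul_one, eq_comm] at this
  have := congrArg (eval ρ₁) hsum
  rw [hp₁, hc] at this
  simp only [eval_add, eval_pow, eval_sub, eval_X, eval_C, eval_mul, hρ₁.eq_zero] at this
  rw [hqp, sub_pow_expChar_pow, ← hqp] at this
  linear_combination -this

theorem pow_add_mul_add_eq_zero_or_of_add_eq_C_mul (hqp : q = p ^ n) (hq : 2 < q)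
    (hcop : IsCoprime p₀ p₁) (hmonic : p₁.Monic) (hdeg : max p₀.degree p₁.degree = q)
    (ha : a ≠ 0) (h : C a * ((X - C ρ₁) * (X - C ρ₂)) ^ q = p₁ * p₀ ^ q)
    (hsum : p₀ + p₁ = C c * (X ^ q + C α * X + C δ)) :
    ρ₁ ^ q + α * ρ₂ + δ = 0 ∨ ρ₂ ^ q + α * ρ₁ + δ = 0 := by
  obtain ⟨hd₀, hd₁⟩ := natDegree_eq_one_and_eq_of_C_mul_pow_eq hq ha hmonic.ne_zero hdeg h
  have hroots : ∀ x, (p₁ * p₀ ^ q).IsRoot x → x = ρ₁ ∨ x = ρ₂ := by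
    intro x hx
    simpa [← h, ha, sub_eq_zero, show q ≠ 0 by omega] using hx
  obtain ⟨β, hβ⟩ := IsAlgClosed.exists_root p₀ (natDegree_pos_iff_degree_pos.mp (by omega)).ne'
  rcases hroots β (by simp [hβ.eq_zero, zero_pow (by omega : q ≠ 0)]) with rfl | rfl
  · refine .inr (pow_add_mul_add_eq_zero_of_isRoot hqp (by omega) hcop hmonic (by omega) hd₁ hsum
      (fun x hx => hroots x (by simp [hx.eq_zero])) hβ)
  · refine .inl (pow_add_mul_add_eq_zero_of_isRoot hqp (by omega) hcop hmonic (by omega) hd₁ hsum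
      (fun x hx => (hroots x (by simp [hx.eq_zero])).symm) hβ)

end Borel

theorem stmt_14_general (q : ℕ) (hq2 : 2 < q)
    (Ω : Type) [Field Ω] [IsAlgClosed Ω]
    (Fq : Subfield Ω) (hFq : Nat.card Fq = q)
    (α δ : Ω) (hα : α ≠ 0)
    (ρ₁ ρ₂ : Ω)
    (p₀ p₁ : Polynomial Ω) (hcop : IsCoprime p₀ p₁)
    (hdeg : max p₀.degree p₁.degree = (q : ℕ)) (hmonic : p₁.Monic)
    (hid : (p₀ + p₁) ^ (q + 1) * (C α * (X - C ρ₁) * (X - C ρ₂)) ^ q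
        = p₁ * p₀ ^ q * (X ^ q + C α * X + C δ) ^ (q + 1)) :
    ρ₁ ^ q + α * ρ₂ + δ = 0 ∨ ρ₂ ^ q + α * ρ₁ + δ = 0 := by
  obtain ⟨p, n, hp, hchar, hqp⟩ := exists_prime_charP_of_card_subfield Fq (by omega)
  have : Fact p.Prime := ⟨hp⟩
  rw [hFq] at hqp
  set G : Polynomial Ω := X ^ q + C α * X + C δ
  have hGmonic : G.Monic := monic_X_pow_add_C_mul_X_add_C (by omega) α δ
  rw [mul_assoc (C α), mul_pow (C α), ← C_pow] at hid
  by_cases hroots : ∀ β, G.IsRoot β → (p₀ + p₁).IsRoot β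
  · have hsep : G.Separable := separable_X_pow_add_C_mul_X_add_C
      (hqp ▸ dvd_pow_self p (by rintro rfl; rw [pow_zero] at hqp; omega)) hα δ
    have hsum := hsep.eq_C_leadingCoeff_mul_of_forall_isRoot hGmonic (by
      rw [natDegree_X_pow_add_C_mul_X_add_C (by omega)]
      exact natDegree_le_of_degree_le ((degree_add_le _ _).trans hdeg.le)) hroots
    obtain ⟨b, hb, hkey⟩ := exists_C_mul_pow_eq_of_add_eq_C_mul (by omega) hmonic
      hGmonic.ne_zero (pow_ne_zero q hα) hid hsum
    exact pow_add_mul_add_eq_zero_or_of_add_eq_C_mul hqp hq2 hcop hmonic hdeg hb hkey hsum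
  · push Not at hroots
    obtain ⟨β, hGβ, hSβ⟩ := hroots
    obtain ⟨rfl, rfl⟩ := eq_and_eq_of_pow_succ_mul_eq (pow_ne_zero q hα) hid hGβ hSβ
    exact .inl (by simpa [G] using hGβ)

/-- The Borel case: if coprime `p₀, p₁` with `max(deg p₀, deg p₁) = q`, `p₁` monic,
satisfy `(p₀ + p₁)^{q+1} F^q = p₁ p₀^q G^{q+1}`, then condition (*) fails
(up to swapping `ρ₁` and `ρ₂`). -/
theorem stmt_14 (q : ℕ) (hq : IsPrimePow q) (hq2 : 2 < q)
    (Ω : Type) [Field Ω] [IsAlgClosed Ω]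
    (Fq K : Subfield Ω) (hsub : Fq ≤ K) (hFq : Nat.card Fq = q)
    (α δ : Ω) (hαK : α ∈ K) (hδK : δ ∈ K) (hα : α ≠ 0)
    (ρ₁ ρ₂ : Ω)
    (p₀ p₁ : Polynomial Ω) (hcop : IsCoprime p₀ p₁)
    (hdeg : max p₀.degree p₁.degree = (q : ℕ)) (hmonic : p₁.Monic)
    (hid : (p₀ + p₁) ^ (q + 1) * (C α * (X - C ρ₁) * (X - C ρ₂)) ^ q
        = p₁ * p₀ ^ q * (X ^ q + C α * X + C δ) ^ (q + 1)) :
    ρ₁ ^ q + α * ρ₂ + δ = 0 ∨ ρ₂ ^ q + α * ρ₁ + δ = 0 :=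
  stmt_14_general q hq2 Ω Fq hFq α δ hα ρ₁ ρ₂ p₀ p₁ hcop hdeg hmonic hid
end

section
/- Let q > 3 be an odd prime power, K a field containing F_q, Ω an algebraically closed field containing K, α, δ ∈ K with α ≠ 0, and ρ₁, ρ₂ ∈ Ω with ρ₁ ≠ ρ₂. Set F = α(A − ρ₁)(A − ρ₂) ∈ Ω[A] and G = A^q + αA + δ ∈ Ω[A], and let Z' = {ζ ∈ Ω : ζ^{2(q+1)} = 1 and ζ² ≠ 1}. Then there exist no coprime polynomials p₀, p₁ ∈ Ω[A] with max(deg p₀, deg p₁) = 1 and p₀ monic satisfying ∏_{ζ ∈ Z'} (p₀ − (ζ − ζ^{−1})p₁)^{(q+1)/2} · F^q = p₁^{2q} p₀^{q²−q} G^{q+1} in Ω[A]. -/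
open Polynomial

private lemma rootMultiplicity_pow' {R : Type*} [CommRing R] [IsDomain R]
    {p : R[X]} (hp : p ≠ 0) (x : R) (n : ℕ) :
    rootMultiplicity x (p ^ n) = n * rootMultiplicity x p := by
  induction n with
  | zero => simp [rootMultiplicity_eq_zero (by simp [IsRoot] : ¬ IsRoot (1 : R[X]) x)]
  | succ n ih =>
    rw [pow_succ, rootMultiplicity_mul (mul_ne_zero (pow_ne_zero _ hp) hp), ih]
    ring

/-- The second dihedral subcase: for odd `q > 3` there are no coprime `p₀, p₁` with
`max(deg p₀, deg p₁) = 1`, `p₀` monic, satisfying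
`∏_{ζ ∈ Z'} (p₀ - (ζ - ζ⁻¹)p₁)^{(q+1)/2} · F^q = p₁^{2q} p₀^{q²-q} G^{q+1}`. -/
theorem stmt_15 (q : ℕ) (hq : IsPrimePow q) (hodd : Odd q) (hq3 : 3 < q)
    (Ω : Type) [Field Ω] [IsAlgClosed Ω]
    (Fq K : Subfield Ω) (hsub : Fq ≤ K) (hFq : Nat.card Fq = q)
    (α δ : Ω) (hαK : α ∈ K) (hδK : δ ∈ K) (hα : α ≠ 0)
    (ρ₁ ρ₂ : Ω) (hρ : ρ₁ ≠ ρ₂)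
    (Z' : Finset Ω) (hZ' : ∀ ζ : Ω, ζ ∈ Z' ↔ ζ ^ (2 * (q + 1)) = 1 ∧ ζ ^ 2 ≠ 1) :
    ¬ ∃ p₀ p₁ : Polynomial Ω, IsCoprime p₀ p₁ ∧ max p₀.degree p₁.degree = 1 ∧ p₀.Monic ∧
      (∏ ζ ∈ Z', (p₀ - C (ζ - ζ⁻¹) * p₁) ^ ((q + 1) / 2))
          * (C α * (X - C ρ₁) * (X - C ρ₂)) ^ q
        = p₁ ^ (2 * q) * p₀ ^ (q ^ 2 - q) * (X ^ q + C α * X + C δ) ^ (q + 1) := by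
  classical
  rintro ⟨p₀, p₁, hcop, hdeg, hmon, heq⟩
  obtain ⟨k, hk⟩ := hodd
  have hq5 : 5 ≤ q := by omega
  have hp0ne : p₀ ≠ 0 := hmon.ne_zero
  have hp1ne : p₁ ≠ 0 := by
    rintro rfl
    have : IsUnit p₀ := isCoprime_zero_right.mp hcop
    have : p₀.degree = 0 := degree_eq_zero_of_isUnit this
    rw [this] at hdeg
    simp at hdeg
  -- G is monic of degree q
  have hGdeg : (X ^ q + C α * X + C δ : Polynomial Ω).degree = q := by
    rw [add_assoc]
    rw [degree_add_eq_left_of_degree_lt, degree_X_pow]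
    rw [degree_X_pow]
    refine lt_of_le_of_lt degree_linear_le ?_
    exact_mod_cast Nat.one_lt_cast.mpr (by omega)
  have hGne : (X ^ q + C α * X + C δ : Polynomial Ω) ≠ 0 := fun h => by
    rw [h, degree_zero] at hGdeg
    exact (by simp : (⊥ : WithBot ℕ) ≠ (q : WithBot ℕ)) hGdeg
  have hGnat : (X ^ q + C α * X + C δ : Polynomial Ω).natDegree = q :=
    natDegree_eq_of_degree_eq_some hGdeg
  have hd1le : p₁.degree ≤ 1 := le_trans (le_max_right _ _) hdeg.le
  have hn1le : p₁.natDegree ≤ 1 := natDegree_le_iff_degree_le.mpr hd1le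
  by_cases hd0 : p₀.degree = 1
  · -- degree count contradiction
    have hn0 : p₀.natDegree = 1 := natDegree_eq_of_degree_eq_some hd0
    have hRHS : (p₁ ^ (2 * q) * p₀ ^ (q ^ 2 - q) * (X ^ q + C α * X + C δ) ^ (q + 1)).natDegree
        = 2 * q * p₁.natDegree + (q ^ 2 - q) * 1 + (q + 1) * q := by
      rw [natDegree_mul (mul_ne_zero (pow_ne_zero _ hp1ne) (pow_ne_zero _ hp0ne))
        (pow_ne_zero _ hGne), natDegree_mul (pow_ne_zero _ hp1ne) (pow_ne_zero _ hp0ne),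
        natDegree_pow, natDegree_pow, natDegree_pow, hn0, hGnat]
    have hcard : Z'.card ≤ 2 * (q + 1) := by
      have hsubZ : Z' ⊆ (nthRoots (2 * (q + 1)) (1 : Ω)).toFinset := by
        intro ζ hζ
        rw [Multiset.mem_toFinset, mem_nthRoots (by omega)]
        exact ((hZ' ζ).mp hζ).1
      calc Z'.card ≤ (nthRoots (2 * (q + 1)) (1 : Ω)).toFinset.card :=
            Finset.card_le_card hsubZ
        _ ≤ Multiset.card (nthRoots (2 * (q + 1)) (1 : Ω)) := Multiset.toFinset_card_le _
        _ ≤ 2 * (q + 1) := card_nthRoots _ _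
    have hprod : (∏ ζ ∈ Z', (p₀ - C (ζ - ζ⁻¹) * p₁) ^ ((q + 1) / 2)).natDegree
        ≤ 2 * (q + 1) * ((q + 1) / 2) := by
      refine le_trans (natDegree_prod_le _ _) ?_
      have hbound : ∀ ζ ∈ Z', ((p₀ - C (ζ - ζ⁻¹) * p₁) ^ ((q + 1) / 2)).natDegree
          ≤ (q + 1) / 2 := by
        intro ζ _
        rw [natDegree_pow]
        have h1 : (p₀ - C (ζ - ζ⁻¹) * p₁).natDegree ≤ 1 := by
          refine le_trans (natDegree_sub_le _ _) (max_le (le_of_eq hn0) ?_)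
          exact le_trans (natDegree_mul_le) (by simpa using hn1le)
        calc (q + 1) / 2 * (p₀ - C (ζ - ζ⁻¹) * p₁).natDegree ≤ (q + 1) / 2 * 1 :=
              Nat.mul_le_mul_left _ h1
          _ = (q + 1) / 2 := by ring_nf
      calc ∑ ζ ∈ Z', ((p₀ - C (ζ - ζ⁻¹) * p₁) ^ ((q + 1) / 2)).natDegree
          ≤ ∑ _ζ ∈ Z', (q + 1) / 2 := Finset.sum_le_sum hbound
        _ = Z'.card * ((q + 1) / 2) := by rw [Finset.sum_const, smul_eq_mul]
        _ ≤ 2 * (q + 1) * ((q + 1) / 2) := Nat.mul_le_mul_right _ hcard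
    have hLHS : ((∏ ζ ∈ Z', (p₀ - C (ζ - ζ⁻¹) * p₁) ^ ((q + 1) / 2))
        * (C α * (X - C ρ₁) * (X - C ρ₂)) ^ q).natDegree
        ≤ 2 * (q + 1) * ((q + 1) / 2) + q * 2 := by
      refine le_trans natDegree_mul_le (add_le_add hprod ?_)
      rw [natDegree_pow]
      refine Nat.mul_le_mul_left _ ?_
      refine le_trans natDegree_mul_le ?_
      refine le_trans (add_le_add natDegree_mul_le le_rfl) ?_
      simp [natDegree_X_sub_C]
    rw [heq, hRHS] at hLHS
    have hhalf : (q + 1) / 2 = k + 1 := by omega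
    rw [hhalf] at hLHS
    have hsubq : q ^ 2 - q + q = q ^ 2 := Nat.sub_add_cancel (by nlinarith)
    nlinarith [hLHS, hsubq, Nat.zero_le p₁.natDegree, hq5, hk]
  · -- p₀ = 1 and p₁ has degree 1; root multiplicity contradiction
    have hd0le : p₀.degree ≤ 1 := le_trans (le_max_left _ _) hdeg.le
    have hd0lt : p₀.degree < 1 := lt_of_le_of_ne hd0le hd0
    have hp0one : p₀ = 1 := by
      rw [← hmon.natDegree_eq_zero]
      have hlt : p₀.natDegree < 1 := by
        rw [natDegree_lt_iff_degree_lt hp0ne]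
        exact_mod_cast hd0lt
      omega
    have hd1 : p₁.degree = 1 := by
      rcases max_choice p₀.degree p₁.degree with h | h
      · rw [h] at hdeg; exact absurd hdeg hd0
      · rw [h] at hdeg; exact hdeg
    subst hp0one
    obtain ⟨r, hr⟩ := IsAlgClosed.exists_root p₁ (by rw [hd1]; exact one_ne_zero)
    -- evaluate at r
    have heval := congrArg (eval r) heq
    simp only [eval_mul, eval_pow, eval_prod, eval_sub, eval_one, eval_add, eval_C, eval_X,
      one_pow, IsRoot.def.mp hr, mul_zero, sub_zero, one_mul, mul_one] at heval
    have heval2 : (α * (r - ρ₁) * (r - ρ₂)) ^ q = 0 := by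
      simpa [Finset.prod_const_one, zero_pow (show 2 * q ≠ 0 by omega)] using heval
    have hF0 : α * (r - ρ₁) * (r - ρ₂) = 0 := pow_eq_zero_iff (by omega) |>.mp heval2
    have hrρ : r = ρ₁ ∨ r = ρ₂ := by
      rcases mul_eq_zero.mp hF0 with h | h
      · rcases mul_eq_zero.mp h with h' | h'
        · exact absurd h' hα
        · exact Or.inl (by linear_combination h')
      · exact Or.inr (by linear_combination h)
    -- root multiplicities
    have hFne : (C α * (X - C ρ₁) * (X - C ρ₂) : Polynomial Ω) ≠ 0 :=
      mul_ne_zero (mul_ne_zero (by simpa using hα) (X_sub_C_ne_zero ρ₁)) (X_sub_C_ne_zero ρ₂)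
    have hPne : (∏ ζ ∈ Z', ((1 : Polynomial Ω) - C (ζ - ζ⁻¹) * p₁) ^ ((q + 1) / 2)) ≠ 0 := by
      refine Finset.prod_ne_zero_iff.mpr fun ζ _ => pow_ne_zero _ fun h => ?_
      have := congrArg (eval r) h
      simp [IsRoot.def.mp hr] at this
    have hProot : ¬ IsRoot (∏ ζ ∈ Z', ((1 : Polynomial Ω) - C (ζ - ζ⁻¹) * p₁) ^ ((q + 1) / 2)) r := by
      simp only [IsRoot.def, eval_prod, eval_pow, eval_sub, eval_one, eval_mul, eval_C,
        IsRoot.def.mp hr, mul_zero, sub_zero, one_pow, Finset.prod_const_one]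
      exact one_ne_zero
    have hrmF : rootMultiplicity r (C α * (X - C ρ₁) * (X - C ρ₂) : Polynomial Ω) = 1 := by
      rw [rootMultiplicity_mul (by exact hFne),
        rootMultiplicity_mul (mul_ne_zero (by simpa using hα) (X_sub_C_ne_zero ρ₁)),
        rootMultiplicity_eq_zero (by simp [IsRoot, hα] : ¬ IsRoot (C α) r)]
      rcases hrρ with h | h
      · subst h
        rw [rootMultiplicity_X_sub_C_self,
          rootMultiplicity_eq_zero (by simp [IsRoot]; intro h; exact hρ (by linear_combination h))]
      · subst h
        rw [rootMultiplicity_X_sub_C_self,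
          rootMultiplicity_eq_zero (by simp [IsRoot]; intro h; exact hρ.symm (by linear_combination h))]
    have hLHSm : rootMultiplicity r
        ((∏ ζ ∈ Z', ((1:Polynomial Ω) - C (ζ - ζ⁻¹) * p₁) ^ ((q + 1) / 2))
          * (C α * (X - C ρ₁) * (X - C ρ₂)) ^ q) = q := by
      rw [rootMultiplicity_mul (mul_ne_zero hPne (pow_ne_zero _ hFne)),
        rootMultiplicity_eq_zero hProot, rootMultiplicity_pow' hFne, hrmF]
      omega
    have hRHSne : (p₁ ^ (2 * q) * (1 : Polynomial Ω) ^ (q ^ 2 - q)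
        * (X ^ q + C α * X + C δ) ^ (q + 1)) ≠ 0 := by
      exact mul_ne_zero (mul_ne_zero (pow_ne_zero _ hp1ne) (by simp)) (pow_ne_zero _ hGne)
    have hRHSm : 2 * q ≤ rootMultiplicity r
        (p₁ ^ (2 * q) * (1 : Polynomial Ω) ^ (q ^ 2 - q)
          * (X ^ q + C α * X + C δ) ^ (q + 1)) := by
      rw [le_rootMultiplicity_iff hRHSne]
      exact Dvd.dvd.mul_right (Dvd.dvd.mul_right
        (pow_dvd_pow_of_dvd (dvd_iff_isRoot.mpr hr) _) _) _
    rw [heq] at hLHSm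
    simp only [one_pow, one_mul] at hLHSm hRHSm heq
    omega
end

section
/- Let q be a prime power, K a field containing F_q, and F, G ∈ K[A] arbitrary polynomials. Define D = (U^{q²} − U)/(U^q − U) ∈ F_q[U], E = U^q − U ∈ F_q[U], and P = D^{q+1}F^q − E^{q²−q}G^{q+1}, regarded as a polynomial in (K[A])[U]. Then: (i) for every b ∈ F_q, substituting U ↦ U + b in P yields P; (ii) for every nonzero a ∈ F_q, substituting U ↦ aU in P yields P; (iii) the polynomial U^{q³−q} · P(A, 1/U), i.e. the reversal of P in the variable U at degree q³ − q, equals P. In other words, P is invariant under the action of PGL₂(F_q) on the variable U. -/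
/-!
Write `E = U^q - U`. The substitutions `U ↦ U + b` and `U ↦ aU` (`a, b ∈ F_q`) multiply both
`E` and `U^{q²} - U` by the same factor (`1`, resp. `a`), by additivity of Frobenius and `a^q = a`;
cancelling `E` shows that they fix `D`, and they fix `E^{q²-q}` because `a^{q²-q} = 1`.
For the reversal, `U · rev_q E = -E` and likewise for `U^{q²} - U`, so multiplicativity of
reversal forces `rev D = D`. The sign disappears in `E^{q²-q}` since `q² - q` is even, and the
missing factor `U^{q²-q}` comes from reversing the constant `G^{q+1}` at degree `q² - q`.
-/

open Polynomial

section
variable {R : Type*} [CommRing R]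

lemma X_pow_sub_X_comp_X_add_C {p : ℕ} [ExpChar R p] {k : ℕ} {c : R} (hc : c ^ p ^ k = c) :
    ((X : R[X]) ^ p ^ k - X).comp (X + C c) = X ^ p ^ k - X := by
  rw [sub_comp, X_pow_comp, X_comp, add_pow_expChar_pow, ← C_pow, hc]
  ring

lemma X_pow_sub_X_comp_C_mul_X {m : ℕ} {a : R} (ha : a ^ m = a) :
    ((X : R[X]) ^ m - X).comp (C a * X) = C a * (X ^ m - X) := by
  rw [sub_comp, X_pow_comp, X_comp, mul_pow, ← C_pow, ha]
  ring

lemma reflect_X_pow_sub_X_mul_X {m : ℕ} (hm : 1 ≤ m) :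
    reflect m ((X : R[X]) ^ m - X) * X = -(X ^ m - X) := by
  have hX : reflect m (X : R[X]) = X ^ (m - 1) := by
    simpa [revAt_le hm] using reflect_monomial (R := R) m 1
  rw [reflect_sub, reflect_monomial, hX, revAt_le le_rfl, Nat.sub_self, pow_zero, sub_mul,
    one_mul, ← pow_succ, Nat.sub_add_cancel hm]
  ring

lemma natDegree_X_pow_sub_X_le {m : ℕ} (hm : 1 ≤ m) : ((X : R[X]) ^ m - X).natDegree ≤ m :=
  (natDegree_sub_le_of_le (natDegree_X_pow_le m) (natDegree_X_le.trans hm)).trans_eq (max_self m)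

lemma natDegree_X_pow_sub_X [Nontrivial R] {m : ℕ} (hm : 2 ≤ m) :
    ((X : R[X]) ^ m - X).natDegree = m := by
  rw [natDegree_sub_eq_left_of_natDegree_lt] <;> simp; omega

lemma X_pow_sub_X_ne_zero [Nontrivial R] {m : ℕ} (hm : 2 ≤ m) : (X : R[X]) ^ m - X ≠ 0 := by
  intro h
  have := natDegree_X_pow_sub_X (R := R) hm
  rw [h, natDegree_zero] at this
  omega

lemma reflect_pow_of_natDegree_le {f : R[X]} {N : ℕ} (hf : f.natDegree ≤ N) (n : ℕ) :
    reflect (n * N) (f ^ n) = reflect N f ^ n := by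
  induction n with
  | zero => simp
  | succ n ih =>
    rw [pow_succ, add_one_mul, reflect_mul _ _ (natDegree_pow_le_of_le n hf) hf, ih, pow_succ]

noncomputable def invariantCombination (q : ℕ) (D : R[X]) (F G : R) : R[X] :=
  D ^ (q + 1) * C F ^ q - (X ^ q - X) ^ (q ^ 2 - q) * C G ^ (q + 1)

lemma invariantCombination_comp {q : ℕ} {D φ u : R[X]} (F G : R) (hD : D.comp φ = D)
    (hE : ((X : R[X]) ^ q - X).comp φ = u * (X ^ q - X)) (hu : u ^ (q ^ 2 - q) = 1) :
    (invariantCombination q D F G).comp φ = invariantCombination q D F G := by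
  rw [invariantCombination, sub_comp, mul_comp, mul_comp, pow_comp, pow_comp, pow_comp, pow_comp,
    C_comp, C_comp, hD, hE, mul_pow, hu, one_mul]

lemma reflect_invariantCombination {q : ℕ} {D : R[X]} (F G : R) (hq : 1 ≤ q)
    (hdeg : D.natDegree ≤ q ^ 2 - q) (hD : reflect (q ^ 2 - q) D = D) :
    reflect (q ^ 3 - q) (invariantCombination q D F G) = invariantCombination q D F G := by
  have hq2 : q ≤ q ^ 2 := Nat.le_self_pow two_ne_zero q
  have hq3 : q ≤ q ^ 3 := Nat.le_self_pow three_ne_zero q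
  have hsplit₁ : q ^ 3 - q = (q + 1) * (q ^ 2 - q) := by zify [hq2, hq3]; ring
  have hsplit₂ : q ^ 3 - q = (q ^ 2 - q) * q + (q ^ 2 - q) := by zify [hq2, hq3]; ring
  have heven : Even (q ^ 2 - q) := by
    rw [show q ^ 2 - q = q * (q - 1) by zify [hq, hq2]; ring]
    exact Nat.even_mul_pred_self q
  have hE := natDegree_X_pow_sub_X_le (R := R) hq
  rw [invariantCombination, reflect_sub]
  congr 1
  · rw [mul_comm, ← C_pow, reflect_C_mul, hsplit₁, reflect_pow_of_natDegree_le hdeg, hD]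
  · rw [← C_pow, hsplit₂, reflect_mul _ _ (natDegree_pow_le_of_le _ hE)
      (by rw [natDegree_C]; exact Nat.zero_le _),
      reflect_pow_of_natDegree_le hE, reflect_C]
    calc reflect q ((X : R[X]) ^ q - X) ^ (q ^ 2 - q) * (C (G ^ (q + 1)) * X ^ (q ^ 2 - q))
        = (reflect q ((X : R[X]) ^ q - X) * X) ^ (q ^ 2 - q) * C (G ^ (q + 1)) := by ring
      _ = _ := by rw [reflect_X_pow_sub_X_mul_X hq, heven.neg_pow]

section Domain
variable [IsDomain R]

lemma comp_eq_self_of_mul_eq {D E E₂ φ u : R[X]} (hD : D * E = E₂) (hE : E ≠ 0)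
    (hu : u ≠ 0) (hEφ : E.comp φ = u * E) (hE₂φ : E₂.comp φ = u * E₂) :
    D.comp φ = D := by
  apply mul_left_cancel₀ (mul_ne_zero hu hE)
  calc u * E * D.comp φ = (E * D).comp φ := by rw [mul_comp, hEφ]
    _ = u * E * D := by rw [mul_comm, hD, hE₂φ, ← hD]; ring

lemma natDegree_eq_of_mul_X_pow_sub_X_eq {D : R[X]} {m n : ℕ} (hm : 2 ≤ m) (hmn : m ≤ n)
    (hD : D * (X ^ m - X) = X ^ n - X) : D.natDegree = n - m := by
  have hD0 : D ≠ 0 := by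
    rintro rfl
    exact X_pow_sub_X_ne_zero (hm.trans hmn) (zero_mul (X ^ m - X : R[X]) ▸ hD).symm
  have := congrArg natDegree hD
  rw [natDegree_mul hD0 (X_pow_sub_X_ne_zero hm), natDegree_X_pow_sub_X hm,
    natDegree_X_pow_sub_X (hm.trans hmn)] at this
  omega

lemma reflect_eq_self_of_mul_X_pow_sub_X_eq {D : R[X]} {m n : ℕ} (hm : 2 ≤ m) (hmn : m ≤ n)
    (hD : D * (X ^ m - X) = X ^ n - X) : reflect (n - m) D = D := by
  have hrefl := reflect_mul D ((X : R[X]) ^ m - X)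
    (natDegree_eq_of_mul_X_pow_sub_X_eq hm hmn hD).le (natDegree_X_pow_sub_X_le (by omega))
  rw [Nat.sub_add_cancel hmn, hD] at hrefl
  have hX := congrArg (· * X) hrefl
  rw [mul_assoc, reflect_X_pow_sub_X_mul_X (by omega), reflect_X_pow_sub_X_mul_X (by omega),
    ← hD, mul_neg, neg_inj] at hX
  exact (mul_right_cancel₀ (X_pow_sub_X_ne_zero hm) hX).symm

lemma invariantCombination_comp_X_add_C {p k : ℕ} [ExpChar R p] {D : R[X]} {c : R} (F G : R)
    (hq : 2 ≤ p ^ k) (hD : D * (X ^ p ^ k - X) = X ^ (p ^ k) ^ 2 - X) (hc : c ^ p ^ k = c) :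
    (invariantCombination (p ^ k) D F G).comp (X + C c) = invariantCombination (p ^ k) D F G := by
  have hE : ((X : R[X]) ^ p ^ k - X).comp (X + C c) = 1 * (X ^ p ^ k - X) := by
    rw [one_mul, X_pow_sub_X_comp_X_add_C hc]
  have hE₂ : ((X : R[X]) ^ (p ^ k) ^ 2 - X).comp (X + C c) = 1 * (X ^ (p ^ k) ^ 2 - X) := by
    rw [one_mul, ← pow_mul, X_pow_sub_X_comp_X_add_C (by rw [pow_mul, sq, pow_mul, hc, hc])]
  exact invariantCombination_comp F G
    (comp_eq_self_of_mul_eq hD (X_pow_sub_X_ne_zero hq) one_ne_zero hE hE₂) hE (one_pow _)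

lemma invariantCombination_comp_C_mul_X {q : ℕ} {D : R[X]} {a : R} (F G : R) (hq : 2 ≤ q)
    (hD : D * (X ^ q - X) = X ^ q ^ 2 - X) (ha : a ^ q = a) (ha0 : a ≠ 0) :
    (invariantCombination q D F G).comp (C a * X) = invariantCombination q D F G := by
  have hunit : a ^ (q - 1) = 1 := by
    apply mul_left_cancel₀ ha0
    rw [← pow_succ', Nat.sub_add_cancel (by omega), ha, mul_one]
  have hE := X_pow_sub_X_comp_C_mul_X (R := R) ha
  have hE₂ := X_pow_sub_X_comp_C_mul_X (R := R) (m := q ^ 2) (by rw [sq, pow_mul, ha, ha])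
  refine invariantCombination_comp F G (comp_eq_self_of_mul_eq hD (X_pow_sub_X_ne_zero hq)
    (C_ne_zero.2 ha0) hE hE₂) hE ?_
  rw [← C_pow, show q ^ 2 - q = (q - 1) * q by rw [Nat.sub_one_mul, sq], pow_mul, hunit,
    one_pow, C_1]

lemma reflect_invariantCombination_of_mul_eq {q : ℕ} {D : R[X]} (F G : R) (hq : 2 ≤ q)
    (hD : D * (X ^ q - X) = X ^ q ^ 2 - X) :
    reflect (q ^ 3 - q) (invariantCombination q D F G) = invariantCombination q D F G :=
  have hq2 : q ≤ q ^ 2 := Nat.le_self_pow two_ne_zero q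
  reflect_invariantCombination F G (by omega) (natDegree_eq_of_mul_X_pow_sub_X_eq hq hq2 hD).le
    (reflect_eq_self_of_mul_X_pow_sub_X_eq hq hq2 hD)

end Domain

end

lemma pow_natCard_of_mem_subfield {K : Type*} [Field K] {L : Subfield K} [Finite L] {b : K}
    (hb : b ∈ L) : b ^ Nat.card L = b := by
  have := Fintype.ofFinite L
  simpa [Nat.card_eq_fintype_card] using
    congrArg Subtype.val (FiniteField.pow_card (⟨b, hb⟩ : L))

lemma exists_expChar_natCard_subfield_eq_pow {K : Type*} [Field K] (L : Subfield K) [Finite L] :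
    ∃ p k : ℕ, ExpChar K p ∧ Nat.card L = p ^ k := by
  have := Fintype.ofFinite L
  have := ringChar.charP L
  obtain ⟨k, hp, hcard⟩ := FiniteField.card L (ringChar L)
  have : ExpChar L (ringChar L) := ExpChar.prime hp
  exact ⟨ringChar L, k, expChar_of_injective_ringHom L.subtype.injective _,
    by rw [Nat.card_eq_fintype_card, hcard]⟩

/-- Invariance of `P = D^{q+1}F^q - E^{q²-q}G^{q+1}` under the action of `PGL₂(F_q)`
on the variable `U`: it is invariant under `U ↦ U + b` for `b ∈ F_q`, under `U ↦ aU`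
for `a ∈ F_q ∖ {0}`, and under the reversal `U ↦ 1/U` at degree `q³ - q`.  Here
`P` lives in `(K[A])[U]`, with `U` the outer variable. -/
theorem stmt_16 (q : ℕ) (hq : IsPrimePow q)
    (K : Type) [Field K] (Fq : Subfield K) (hFq : Nat.card Fq = q)
    (F G : K[X])
    (D : Polynomial K[X])
    (hD : D * (X ^ q - X) = X ^ q ^ 2 - X)
    (P : Polynomial K[X])
    (hP : P = D ^ (q + 1) * Polynomial.C F ^ q
      - (X ^ q - X) ^ (q ^ 2 - q) * Polynomial.C G ^ (q + 1)) :
    (∀ b : K, b ∈ Fq → P.comp (X + Polynomial.C (Polynomial.C b)) = P) ∧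
    (∀ a : K, a ∈ Fq → a ≠ 0 → P.comp (Polynomial.C (Polynomial.C a) * X) = P) ∧
    P.reflect (q ^ 3 - q) = P := by
  have hq2 : 2 ≤ q := hq.two_le
  have : Finite Fq := Nat.finite_of_card_ne_zero (by omega)
  have hfix : ∀ b ∈ Fq, (C b : K[X]) ^ q = C b := fun b hb => by
    rw [← C_pow, ← hFq, pow_natCard_of_mem_subfield hb]
  replace hP : P = invariantCombination q D F G := hP
  subst hP
  refine ⟨fun b hb => ?_, fun a ha ha0 => ?_, reflect_invariantCombination_of_mul_eq F G hq2 hD⟩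
  · obtain ⟨p, k, _, hpk⟩ := exists_expChar_natCard_subfield_eq_pow Fq
    obtain rfl : q = p ^ k := hFq.symm.trans hpk
    exact invariantCombination_comp_X_add_C F G hq2 hD (hfix b hb)
  · exact invariantCombination_comp_C_mul_X F G hq2 hD (hfix a ha) (C_ne_zero.2 ha0)
end
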